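/- arXiv:1308.3026 — 4 statements merged into one kernel-verified Lean document; each statement's English description precedes it below -/
import Mathlib

section
/- Let A be a diagonalizable derivation of the Heisenberg algebra 𝓗_n with positive eigenvalues α_1 < ⋯ < α_{k+1} and eigenspaces U_1, …, U_{k+1}. Then [U_i, U_j] = 0 for all 1 ≤ i, j ≤ k+1 with i + j ≠ k+1. -/
open scoped BigOperators RealInnerProductSpace ENNReal
open Module Filter

noncomputable section

/-- The underlying space of the `n`-th Heisenberg group/algebra: `ℝ^{2n+1}`
with a fixed inner product. -/
abbrev HV (n : ℕ) : Type := EuclideanSpace ℝ (Fin (2 * n + 1))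

/-- `br` is a Heisenberg Lie bracket on `ℝ^{2n+1}`: with respect to some basis
`b`, the only nontrivial bracket relations are `[b_{2s}, b_{2s+1}] = b_{2n}` (0-indexed). -/
def IsHeisenbergBracket (n : ℕ) (br : HV n →ₗ[ℝ] HV n →ₗ[ℝ] HV n) : Prop :=
  ∃ b : Basis (Fin (2 * n + 1)) ℝ (HV n),
    ∀ i j : Fin (2 * n + 1),
      br (b i) (b j) =
        (if (i : ℕ) % 2 = 0 ∧ (j : ℕ) = (i : ℕ) + 1 ∧ (i : ℕ) < 2 * n then (1 : ℝ)
         else if (j : ℕ) % 2 = 0 ∧ (i : ℕ) = (j : ℕ) + 1 ∧ (j : ℕ) < 2 * n then (-1 : ℝ)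
         else 0) • b ⟨2 * n, by omega⟩

/-- `A` is a derivation of the Lie algebra `(ℝ^{2n+1}, br)`. -/
def IsDerivation {n : ℕ} (br : HV n →ₗ[ℝ] HV n →ₗ[ℝ] HV n)
    (A : HV n →ₗ[ℝ] HV n) : Prop :=
  ∀ x y, A (br x y) = br (A x) y + br x (A y)

/-- The group product `x * y = x + y + (1/2)[x,y]` (BCH formula). -/
def hMul {n : ℕ} (br : HV n →ₗ[ℝ] HV n →ₗ[ℝ] HV n) (x y : HV n) : HV n :=
  x + y + (2⁻¹ : ℝ) • br x y

/-- The left coset `g * S`. -/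
def leftCoset {n : ℕ} (br : HV n →ₗ[ℝ] HV n →ₗ[ℝ] HV n) (g : HV n)
    (S : Set (HV n)) : Set (HV n) :=
  hMul br g '' S

/-- `‖x‖_A = Σ_i |x_i|^{1/α_i}`, where `x_i` is the component of `x` in the
eigenspace `U i` (computed as the orthogonal projection; the eigenspaces are
assumed mutually orthogonal with sum everything). -/
def normA {n k : ℕ} (α : Fin (k + 1) → ℝ) (U : Fin (k + 1) → Submodule ℝ (HV n))
    (x : HV n) : ℝ :=
  ∑ i, ‖((U i).orthogonalProjectionOnto x : HV n)‖ ^ (α i)⁻¹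

/-- The parabolic visual quasimetric `d_A(p,q) = ‖(-p) * q‖_A`. -/
def qd {n k : ℕ} (br : HV n →ₗ[ℝ] HV n →ₗ[ℝ] HV n) (α : Fin (k + 1) → ℝ)
    (U : Fin (k + 1) → Submodule ℝ (HV n)) (p q : HV n) : ℝ :=
  normA α U (hMul br (-p) q)

/-- `η` is a homeomorphism of `[0,∞)` onto itself. -/
def IsHomeoOfNonneg (η : ℝ → ℝ) : Prop :=
  η 0 = 0 ∧ StrictMonoOn η (Set.Ici 0) ∧ ContinuousOn η (Set.Ici 0) ∧
    ∀ s : ℝ, 0 ≤ s → ∃ t : ℝ, 0 ≤ t ∧ η t = s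

/-- `F` is an `η`-quasisymmetry from `(X, d1)` to `(X, d2)`. -/
def IsQS {X : Type*} (d1 d2 : X → X → ℝ) (η : ℝ → ℝ) (F : X → X) : Prop :=
  Function.Bijective F ∧
    ∀ x y z : X, x ≠ y → y ≠ z → x ≠ z →
      d2 (F x) (F y) / d2 (F x) (F z) ≤ η (d1 x y / d1 x z)

/-- `L_F(x,r) = sup { d2(F x, F x') : d1(x,x') ≤ r }`. -/
def LFr {X : Type*} (d1 d2 : X → X → ℝ) (F : X → X) (x : X) (r : ℝ) : ℝ≥0∞ :=
  ⨆ (x' : X) (_ : d1 x x' ≤ r), ENNReal.ofReal (d2 (F x) (F x'))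

/-- `l_F(x,r) = inf { d2(F x, F x') : d1(x,x') ≥ r }`. -/
def lFr {X : Type*} (d1 d2 : X → X → ℝ) (F : X → X) (x : X) (r : ℝ) : ℝ≥0∞ :=
  ⨅ (x' : X) (_ : r ≤ d1 x x'), ENNReal.ofReal (d2 (F x) (F x'))

/-- `L_F(x) = limsup_{r→0⁺} L_F(x,r)/r`. -/
def LF {X : Type*} (d1 d2 : X → X → ℝ) (F : X → X) (x : X) : ℝ≥0∞ :=
  Filter.limsup (fun r : ℝ => LFr d1 d2 F x r / ENNReal.ofReal r) (nhdsWithin 0 (Set.Ioi 0))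

/-- `l_F(x) = liminf_{r→0⁺} l_F(x,r)/r`. -/
def lF {X : Type*} (d1 d2 : X → X → ℝ) (F : X → X) (x : X) : ℝ≥0∞ :=
  Filter.liminf (fun r : ℝ => lFr d1 d2 F x r / ENNReal.ofReal r) (nhdsWithin 0 (Set.Ioi 0))

/-! The line `ℝ e_{2n+1}` is both the centre of `𝓗_n` and the span of all brackets, so a
derivation `A` preserves it, `A e_{2n+1} = β e_{2n+1}`, and `[U_i, U_j] ≠ 0` forces
`α_i + α_j = β`. An eigenvector outside the centre brackets nontrivially with some eigenspace,
so every `α_i ≠ β` has a partner `α_j` with `α_i + α_j = β`. As `β` is itself an eigenvalue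
and all `α_i` are positive, `β = α_{k+1}`, and the partner map on `α_1 < ⋯ < α_k` is strictly
decreasing, hence it is `i ↦ k + 1 - i`. -/

open Module.End

theorem Fin.eq_rev_of_strictAnti {k : ℕ} {f : Fin k → Fin k} (hf : StrictAnti f) (i : Fin k) :
    f i = i.rev :=
  le_antisymm (le_rev_iff.mp (rev_strictAnti.comp hf).le_apply)
    (by simpa using (hf.comp rev_strictAnti).le_apply (x := i.rev))

section Pairing

variable {M : Type*} [AddCommMonoid M] [LinearOrder M] [IsOrderedCancelAddMonoid M]
  {k : ℕ} {α : Fin (k + 1) → M}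

theorem StrictMono.lt_of_add_eq (hα : StrictMono α) (hpos : ∀ i, 0 < α i) {i j m : Fin (k + 1)}
    (h : α i + α j = α m) : i < m :=
  hα.lt_iff_lt.mp (h ▸ lt_add_of_pos_right _ (hpos j))

theorem StrictMono.eq_last_of_forall_exists_add_eq (hα : StrictMono α) (hpos : ∀ i, 0 < α i)
    {m : Fin (k + 1)} (hpair : ∀ i, α i ≠ α m → ∃ j, α i + α j = α m) :
    m = Fin.last k := by
  by_contra hm
  obtain ⟨j, hj⟩ := hpair (Fin.last k) (hα.injective.ne (Ne.symm hm))
  exact (hα.lt_of_add_eq hpos hj).not_ge (Fin.le_last m)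

theorem StrictMono.val_add_val_eq_of_add_eq_last (hα : StrictMono α) (hpos : ∀ i, 0 < α i)
    (hpair : ∀ i, α i ≠ α (Fin.last k) → ∃ j, α i + α j = α (Fin.last k))
    {i j : Fin (k + 1)} (h : α i + α j = α (Fin.last k)) : (i : ℕ) + j + 1 = k := by
  have hpartner : ∀ i : Fin k, ∃ j : Fin k, α i.castSucc + α j.castSucc = α (Fin.last k) := by
    intro i
    obtain ⟨j, hj⟩ := hpair i.castSucc (hα.injective.ne (Fin.castSucc_lt_last i).ne)
    obtain ⟨j, rfl⟩ :=
      Fin.exists_castSucc_eq.mpr (hα.lt_of_add_eq hpos ((add_comm _ _).trans hj)).ne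
    exact ⟨j, hj⟩
  choose f hf using hpartner
  have hanti : StrictAnti f := fun a c hac => by
    have : α (f c).castSucc < α (f a).castSucc := lt_of_not_ge fun hle =>
      (add_lt_add_of_lt_of_le (hα (Fin.castSucc_lt_castSucc_iff.mpr hac)) hle).ne
        ((hf a).trans (hf c).symm)
    exact Fin.castSucc_lt_castSucc_iff.mp (hα.lt_iff_lt.mp this)
  obtain ⟨i, rfl⟩ := Fin.exists_castSucc_eq.mpr (hα.lt_of_add_eq hpos h).ne
  obtain ⟨j, rfl⟩ :=
    Fin.exists_castSucc_eq.mpr (hα.lt_of_add_eq hpos ((add_comm _ _).trans h)).ne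
  have hj : j = f i :=
    Fin.castSucc_injective _ (hα.injective (add_left_cancel (h.trans (hf i).symm)))
  have hval := congrArg Fin.val (hj.trans (Fin.eq_rev_of_strictAnti hanti i))
  simp only [Fin.val_rev, Fin.val_castSucc] at hval ⊢
  omega

end Pairing

section Basis

variable {K V ι : Type*} [Field K] [AddCommGroup V] [Module K V] [Fintype ι] [DecidableEq ι]

theorem Module.Basis.mem_span_of_forall_bracket_eq_zero (b : Basis ι K V)
    {br : V →ₗ[K] V →ₗ[K] V} {z : ι}
    (hpartner : ∀ m ≠ z, ∃ (j : ι) (s : K), s ≠ 0 ∧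
      ∀ i, br (b i) (b j) = (if i = m then s else 0) • b z)
    {x : V} (hx : ∀ y, br x y = 0) : x ∈ K ∙ b z := by
  rw [← Set.image_singleton, b.mem_span_image]
  intro m hm
  by_contra hmz
  obtain ⟨j, s, hs, hj⟩ := hpartner m hmz
  have hxj : br x (b j) = (b.repr x m * s) • b z := by
    conv_lhs => rw [← b.sum_repr x]
    simp only [map_sum, LinearMap.sum_apply, map_smul, LinearMap.smul_apply, hj, smul_smul,
      ← Finset.sum_smul, mul_ite, mul_zero, Finset.sum_ite_eq', Finset.mem_univ, if_true]
  rw [hx, eq_comm] at hxj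
  exact (Finsupp.mem_support_iff.mp hm) (by simpa [hs, b.ne_zero] using hxj)

end Basis

section Eigenspace

variable {K V : Type*} [Field K] [AddCommGroup V] [Module K V]

theorem mem_eigenspace_add_of_derivation {R M : Type*} [CommRing R] [AddCommGroup M] [Module R M]
    {br : M →ₗ[R] M →ₗ[R] M} {A : End R M}
    (hA : ∀ x y, A (br x y) = br (A x) y + br x (A y)) {a b : R} {x y : M}
    (hx : x ∈ A.eigenspace a) (hy : y ∈ A.eigenspace b) : br x y ∈ A.eigenspace (a + b) := by
  rw [mem_eigenspace_iff] at hx hy ⊢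
  rw [hA, hx, hy, LinearMap.map_smul₂, map_smul, add_smul]

theorem eq_of_mem_eigenspace_of_mem_eigenspace {A : End K V} {a b : K} {v : V} (hv : v ≠ 0)
    (ha : v ∈ A.eigenspace a) (hb : v ∈ A.eigenspace b) : a = b :=
  smul_left_injective K hv ((mem_eigenspace_iff.mp ha).symm.trans (mem_eigenspace_iff.mp hb))

theorem exists_eq_of_mem_eigenspace_of_iSup_eq_top {ι : Type*} {A : End K V} {α : ι → K}
    (hspan : ⨆ i, A.eigenspace (α i) = ⊤) {β : K} {v : V} (hv : v ≠ 0)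
    (hβ : v ∈ A.eigenspace β) : ∃ i, β = α i := by
  by_contra! h
  have hle : ⊤ ≤ ⨆ (μ) (_ : μ ≠ β), A.eigenspace μ :=
    hspan ▸ iSup_le fun i => le_iSup₂_of_le (α i) (h i).symm le_rfl
  have hbot := disjoint_top.mp ((A.eigenspaces_iSupIndep β).mono_right hle)
  exact hv ((Submodule.mem_bot K).mp (hbot ▸ hβ))

end Eigenspace

section HeisenbergType

variable {K V : Type*} [Field K] [AddCommGroup V] [Module K V]

structure IsHeisenbergType (br : V →ₗ[K] V →ₗ[K] V) (Z : V) : Prop where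
  ne_zero : Z ≠ 0
  bracket_left_eq_zero : ∀ y, br Z y = 0
  bracket_mem_span : ∀ x y, br x y ∈ K ∙ Z
  mem_span_of_forall_bracket_eq_zero : ∀ x, (∀ y, br x y = 0) → x ∈ K ∙ Z

namespace IsHeisenbergType

variable {br : V →ₗ[K] V →ₗ[K] V} {Z : V} {A : End K V}

theorem exists_mem_eigenspace (hZ : IsHeisenbergType br Z)
    (hA : ∀ x y, A (br x y) = br (A x) y + br x (A y)) : ∃ β, Z ∈ A.eigenspace β := by
  have hAZ : A Z ∈ K ∙ Z := hZ.mem_span_of_forall_bracket_eq_zero _ fun y => by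
    have := hA Z y
    rwa [hZ.bracket_left_eq_zero, hZ.bracket_left_eq_zero, map_zero, add_zero, eq_comm] at this
  obtain ⟨β, hβ⟩ := Submodule.mem_span_singleton.mp hAZ
  exact ⟨β, mem_eigenspace_iff.mpr hβ.symm⟩

theorem add_eq_of_bracket_ne_zero (hZ : IsHeisenbergType br Z)
    (hA : ∀ x y, A (br x y) = br (A x) y + br x (A y)) {β : K} (hβ : Z ∈ A.eigenspace β)
    {a b : K} {x y : V} (hx : x ∈ A.eigenspace a) (hy : y ∈ A.eigenspace b)
    (hxy : br x y ≠ 0) : a + b = β :=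
  eq_of_mem_eigenspace_of_mem_eigenspace hxy (mem_eigenspace_add_of_derivation hA hx hy)
    ((Submodule.span_singleton_le_iff_mem _ _).mpr hβ (hZ.bracket_mem_span x y))

theorem exists_add_eq (hZ : IsHeisenbergType br Z)
    (hA : ∀ x y, A (br x y) = br (A x) y + br x (A y)) {β : K} (hβ : Z ∈ A.eigenspace β)
    {ι : Type*} {α : ι → K} (hspan : ⨆ i, A.eigenspace (α i) = ⊤) {a : K}
    (hne : A.eigenspace a ≠ ⊥) (ha : a ≠ β) : ∃ i, a + α i = β := by
  obtain ⟨x, hx, hx0⟩ := (Submodule.ne_bot_iff _).mp hne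
  have hxZ : x ∉ K ∙ Z := fun hxZ => ha <| eq_of_mem_eigenspace_of_mem_eigenspace hx0 hx
    ((Submodule.span_singleton_le_iff_mem _ _).mpr hβ hxZ)
  by_contra! h
  refine hxZ (hZ.mem_span_of_forall_bracket_eq_zero x fun y => ?_)
  have hker : ⊤ ≤ LinearMap.ker (br x) := hspan ▸ iSup_le fun i z hz =>
    not_not.mp fun hz0 => h i (hZ.add_eq_of_bracket_ne_zero hA hβ hx hz hz0)
  exact hker trivial

end IsHeisenbergType

end HeisenbergType

theorem IsHeisenbergBracket.exists_isHeisenbergType {n : ℕ}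
    {br : HV n →ₗ[ℝ] HV n →ₗ[ℝ] HV n} (hbr : IsHeisenbergBracket n br) :
    ∃ Z, IsHeisenbergType br Z := by
  obtain ⟨b, hb⟩ := hbr
  refine ⟨b ⟨2 * n, by omega⟩, b.ne_zero _, fun y => ?_, fun x y => ?_, fun x hx => ?_⟩
  · have hZ : br (b ⟨2 * n, by omega⟩) = 0 := b.ext fun j => by
      rw [hb, if_neg (by simp), if_neg (by simp; omega), zero_smul, LinearMap.zero_apply]
    rw [hZ, LinearMap.zero_apply]
  · have hmkQ : br.compr₂ (ℝ ∙ b ⟨2 * n, by omega⟩).mkQ = 0 :=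
      LinearMap.ext_basis b b fun i j => by
        rw [LinearMap.compr₂_apply, hb, LinearMap.zero_apply, LinearMap.zero_apply,
          Submodule.mkQ_apply, Submodule.Quotient.mk_eq_zero]
        exact Submodule.smul_mem _ _ (Submodule.mem_span_singleton_self _)
    exact (Submodule.Quotient.mk_eq_zero _).mp (LinearMap.congr_fun₂ hmkQ x y)
  · refine b.mem_span_of_forall_bracket_eq_zero (fun m hm => ?_) hx
    have hm : (m : ℕ) < 2 * n :=
      lt_of_le_of_ne (Nat.lt_succ_iff.mp m.isLt) fun h => hm (Fin.ext h)
    rcases Nat.mod_two_eq_zero_or_one m with hm2 | hm2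
    · refine ⟨⟨m + 1, by omega⟩, 1, one_ne_zero, fun i => ?_⟩
      simp only [hb]
      rcases eq_or_ne i m with rfl | him
      · rw [if_pos (by omega), if_pos rfl]
      · have := Fin.val_ne_of_ne him
        rw [if_neg (by omega), if_neg (by omega), if_neg him]
    · refine ⟨⟨m - 1, by omega⟩, -1, by norm_num, fun i => ?_⟩
      simp only [hb]
      rcases eq_or_ne i m with rfl | him
      · rw [if_neg (by omega), if_pos (by omega), if_pos rfl]
      · have := Fin.val_ne_of_ne him
        rw [if_neg (by omega), if_neg (by omega), if_neg him]

theorem stmt1_general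
    (n k : ℕ)
    (br : HV n →ₗ[ℝ] HV n →ₗ[ℝ] HV n) (hbr : IsHeisenbergBracket n br)
    (A : HV n →ₗ[ℝ] HV n) (hA : IsDerivation br A)
    (α : Fin (k + 1) → ℝ) (hαmono : StrictMono α) (hαpos : ∀ i, 0 < α i)
    (U : Fin (k + 1) → Submodule ℝ (HV n))
    (hU : ∀ i, U i = Module.End.eigenspace A (α i))
    (hUne : ∀ i, U i ≠ ⊥) (hUspan : (⨆ i, U i) = ⊤) :
    ∀ i j : Fin (k + 1), (i : ℕ) + (j : ℕ) + 2 ≠ k + 1 →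
      ∀ x ∈ U i, ∀ y ∈ U j, br x y = 0 := by
  obtain rfl : U = fun i => eigenspace A (α i) := funext hU
  obtain ⟨Z, hZ⟩ := hbr.exists_isHeisenbergType
  obtain ⟨β, hβ⟩ := hZ.exists_mem_eigenspace hA
  obtain ⟨m, rfl⟩ := exists_eq_of_mem_eigenspace_of_iSup_eq_top hUspan hZ.ne_zero hβ
  have hpair : ∀ i, α i ≠ α m → ∃ j, α i + α j = α m := fun i hi =>
    hZ.exists_add_eq hA hβ hUspan (hUne i) hi
  obtain rfl := hαmono.eq_last_of_forall_exists_add_eq hαpos hpair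
  intro i j hij x hx y hy
  by_contra hxy
  have := hαmono.val_add_val_eq_of_add_eq_last hαpos hpair
    (hZ.add_eq_of_bracket_ne_zero hA hβ hx hy hxy)
  omega

theorem stmt1
    (n k : ℕ) (hn : 1 ≤ n) (hk : 1 ≤ k)
    (br : HV n →ₗ[ℝ] HV n →ₗ[ℝ] HV n) (hbr : IsHeisenbergBracket n br)
    (A : HV n →ₗ[ℝ] HV n) (hA : IsDerivation br A)
    (α : Fin (k + 1) → ℝ) (hαmono : StrictMono α) (hαpos : ∀ i, 0 < α i)
    (U : Fin (k + 1) → Submodule ℝ (HV n))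
    (hU : ∀ i, U i = Module.End.eigenspace A (α i))
    (hUne : ∀ i, U i ≠ ⊥) (hUspan : (⨆ i, U i) = ⊤) :
    ∀ i j : Fin (k + 1), (i : ℕ) + (j : ℕ) + 2 ≠ k + 1 →
      ∀ x ∈ U i, ∀ y ∈ U j, br x y = 0 :=
  stmt1_general n k br hbr A hA α hαmono hαpos U hU hUne hUspan
end
end

section
/- Let A be a diagonalizable derivation of the Heisenberg algebra 𝓗_n with positive eigenvalues α_1 < ⋯ < α_{k+1} and eigenspaces U_1, …, U_{k+1}. Then for every 1 ≤ i ≤ k one has [U_i, U_{k+1−i}] ≠ 0 and α_i + α_{k+1−i} = α_{k+1}. -/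
/-!
The Heisenberg bracket takes values in the centre `ℝ ∙ z`, and only central vectors bracket
trivially with everything. A derivation `A` therefore maps `z` to
`c • z`, and if `[x, y] ≠ 0` for eigenvectors with eigenvalues `a, b`, applying `A` to
`[x, y] = t • z` gives `a + b = c`. As the eigenspaces span, `z` lies in one of them, so `c` is
some `α m`; every other eigenspace contains a non-central vector, hence pairs nontrivially with
some eigenspace `U j`, so `α i + α j = c` with `α j > 0`. Thus `c = α (last k)`, and `i ↦ j` is
a strictly decreasing self-map of `{0, …, k - 1}`, i.e. `j = k - 1 - i`.
-/

open scoped BigOperators RealInnerProductSpace ENNReal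
open Module Filter

noncomputable section

open Module.End Submodule

theorem Module.End.exists_eq_of_iSup_eigenspace_eq_top {K V ι : Type*} [Field K]
    [AddCommGroup V] [Module K V] {f : Module.End K V} {μ : ι → K}
    (h : ⨆ i, eigenspace f (μ i) = ⊤) {c : K} {v : V} (hv : v ∈ eigenspace f c)
    (hv0 : v ≠ 0) : ∃ i, μ i = c := by
  by_contra! hμ
  have hle : ⨆ i, eigenspace f (μ i) ≤ ⨆ (ν : K) (_ : ν ≠ c), eigenspace f ν :=
    iSup_le fun i => le_iSup₂ (f := fun ν _ => eigenspace f ν) (μ i) (hμ i)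
  exact hv0 (disjoint_def.mp (eigenspaces_iSupIndep f c) v hv (hle (h ▸ mem_top)))

section FinPairing

variable {M : Type*} [AddCommGroup M] [LinearOrder M] [IsOrderedAddMonoid M]

theorem Fin.eq_rev_of_add_eq {k : ℕ} {α : Fin k → M} (hα : StrictMono α) {c : M}
    (h : ∀ i, ∃ j, α i + α j = c) {i j : Fin k} (hij : α i + α j = c) : j = i.rev := by
  choose σ hσ using h
  have hσ_anti : StrictAnti σ := fun i i' hii' =>
    hα.lt_iff_lt.mp <| lt_of_add_lt_add_left <|
      calc α i + α (σ i') < α i' + α (σ i') := by gcongr; exact hα hii'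
        _ = α i + α (σ i) := (hσ i').trans (hσ i).symm
  have hσ_rev : ∀ i, σ i = i.rev := fun i => by
    rw [← Fin.rev_rev (σ i)]
    exact congrArg Fin.rev ((Fin.rev_strictAnti.comp hσ_anti).apply_eq (x := i))
  rw [← hσ_rev i]
  exact hα.injective (add_left_cancel (hij.trans (hσ i).symm))

theorem Fin.val_add_val_add_one_of_add_eq_last {k : ℕ} {α : Fin (k + 1) → M}
    (hα : StrictMono α) (hpos : ∀ i, 0 < α i)
    (h : ∀ i, i ≠ Fin.last k → ∃ j, α i + α j = α (Fin.last k)) {i j : Fin (k + 1)}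
    (hij : α i + α j = α (Fin.last k)) : (i : ℕ) + j + 1 = k := by
  have lt_last : ∀ {a b}, α a + α b = α (Fin.last k) → (a : ℕ) < k := fun {a b} hab => by
    have : α a < α (Fin.last k) := hab ▸ lt_add_of_pos_right (α a) (hpos b)
    exact Fin.val_lt_last (hα.lt_iff_lt.mp this).ne
  have hi := lt_last hij
  have hj := lt_last ((add_comm _ _).trans hij)
  have h' : ∀ i' : Fin k, ∃ j' : Fin k, α i'.castSucc + α j'.castSucc = α (Fin.last k) :=
    fun i' => by
      obtain ⟨j, hj⟩ := h i'.castSucc (Fin.castSucc_ne_last i')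
      exact ⟨j.castLT (lt_last ((add_comm _ _).trans hj)), by simpa using hj⟩
  have hrev := Fin.eq_rev_of_add_eq (hα.comp Fin.strictMono_castSucc) h'
    (i := i.castLT hi) (j := j.castLT hj) (by simpa using hij)
  have := congrArg Fin.val hrev
  simp only [Fin.val_castLT, Fin.val_rev] at this
  omega

end FinPairing

section CentralBracket

variable {K V : Type*} [Field K] [AddCommGroup V] [Module K V]
  {br : V →ₗ[K] V →ₗ[K] V} {z : V} {A : Module.End K V}

theorem exists_apply_eq_smul_of_derivation (hcenter : br z = 0)
    (hrad : ∀ x, br x = 0 → x ∈ K ∙ z) (hA : ∀ x y, A (br x y) = br (A x) y + br x (A y)) :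
    ∃ c : K, A z = c • z := by
  have hAz : br (A z) = 0 := LinearMap.ext fun y => by
    simpa [hcenter] using (hA z y).symm
  obtain ⟨c, hc⟩ := mem_span_singleton.mp (hrad _ hAz)
  exact ⟨c, hc.symm⟩

theorem add_eq_of_bracket_ne_zero (hrange : ∀ x y, br x y ∈ K ∙ z)
    (hA : ∀ x y, A (br x y) = br (A x) y + br x (A y)) {c a b : K} (hAz : A z = c • z)
    {x y : V} (hx : A x = a • x) (hy : A y = b • y) (hxy : br x y ≠ 0) : a + b = c := by
  obtain ⟨t, ht⟩ := mem_span_singleton.mp (hrange x y)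
  refine smul_left_injective K hxy ?_
  calc (a + b) • br x y = A (br x y) := by simp [hA, hx, hy, add_smul]
    _ = c • br x y := by rw [← ht, map_smul, hAz, smul_comm]

theorem eq_of_mem_span_singleton {c a : K} (hAz : A z = c • z) {x : V} (hx : A x = a • x)
    (hx0 : x ≠ 0) (hxz : x ∈ K ∙ z) : a = c := by
  obtain ⟨t, rfl⟩ := mem_span_singleton.mp hxz
  refine smul_left_injective K hx0 ?_
  simp only [← hx, map_smul, hAz, smul_comm t c]

theorem exists_bracket_ne_zero_of_notMem_span (hrad : ∀ x, br x = 0 → x ∈ K ∙ z)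
    {ι : Type*} {U : ι → Submodule K V} (hU : ⨆ i, U i = ⊤) {x : V} (hx : x ∉ K ∙ z) :
    ∃ i, ∃ y ∈ U i, br x y ≠ 0 := by
  by_contra! h
  refine hx (hrad x (LinearMap.ext fun y => ?_))
  have hker : ⨆ i, U i ≤ LinearMap.ker (br x) := iSup_le fun i y hy => h i y hy
  exact hker (hU ▸ mem_top)

theorem exists_bracket_ne_zero_and_add_eq (hrange : ∀ x y, br x y ∈ K ∙ z)
    (hrad : ∀ x, br x = 0 → x ∈ K ∙ z) (hA : ∀ x y, A (br x y) = br (A x) y + br x (A y))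
    {c : K} (hAz : A z = c • z) {ι : Type*} {α : ι → K} (hne : ∀ i, eigenspace A (α i) ≠ ⊥)
    (hspan : ⨆ i, eigenspace A (α i) = ⊤) {i : ι} (hi : α i ≠ c) :
    ∃ j, (∃ x ∈ eigenspace A (α i), ∃ y ∈ eigenspace A (α j), br x y ≠ 0) ∧ α i + α j = c := by
  obtain ⟨x, hx, hx0⟩ := exists_mem_ne_zero_of_ne_bot (hne i)
  have hxz : x ∉ K ∙ z := fun hxz =>
    hi (eq_of_mem_span_singleton hAz (mem_eigenspace_iff.mp hx) hx0 hxz)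
  obtain ⟨j, y, hy, hxy⟩ := exists_bracket_ne_zero_of_notMem_span hrad hspan hxz
  exact ⟨j, ⟨x, hx, y, hy, hxy⟩,
    add_eq_of_bracket_ne_zero hrange hA hAz (mem_eigenspace_iff.mp hx)
      (mem_eigenspace_iff.mp hy) hxy⟩

variable [LinearOrder K] [IsStrictOrderedRing K]

theorem bracket_ne_zero_and_add_eq_last_of_add_eq (hcenter : br z = 0)
    (hrange : ∀ x y, br x y ∈ K ∙ z) (hrad : ∀ x, br x = 0 → x ∈ K ∙ z) (hz : z ≠ 0)
    (hA : ∀ x y, A (br x y) = br (A x) y + br x (A y)) {k : ℕ} {α : Fin (k + 1) → K}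
    (hα : StrictMono α) (hpos : ∀ i, 0 < α i) (hne : ∀ i, eigenspace A (α i) ≠ ⊥)
    (hspan : ⨆ i, eigenspace A (α i) = ⊤) :
    ∀ i j : Fin (k + 1), (i : ℕ) + (j : ℕ) + 2 = k + 1 →
      (∃ x ∈ eigenspace A (α i), ∃ y ∈ eigenspace A (α j), br x y ≠ 0) ∧
        α i + α j = α (Fin.last k) := by
  obtain ⟨c, hAz⟩ := exists_apply_eq_smul_of_derivation hcenter hrad hA
  have partner := fun i => exists_bracket_ne_zero_and_add_eq hrange hrad hA hAz hne hspan (i := i)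
  have hc : c = α (Fin.last k) := by
    obtain ⟨m, rfl⟩ := exists_eq_of_iSup_eigenspace_eq_top hspan (mem_eigenspace_iff.mpr hAz) hz
    by_contra hm
    obtain ⟨j, -, hj⟩ := partner (Fin.last k) (Ne.symm hm)
    have : α m ≤ α (Fin.last k) := hα.monotone (Fin.le_last m)
    linarith [hpos j]
  subst hc
  intro i j hij
  obtain ⟨j', hbr, hj'⟩ := partner i (hα.injective.ne (Fin.ne_of_val_ne (by simp; omega)))
  have : j' = j := Fin.ext (by
    have := Fin.val_add_val_add_one_of_add_eq_last hα hpos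
      (fun i hi => (partner i (hα.injective.ne hi)).imp fun _ => And.right) hj'
    omega)
  subst this
  exact ⟨hbr, hj'⟩

end CentralBracket

def heisenbergCoeff (n : ℕ) (i j : Fin (2 * n + 1)) : ℝ :=
  if (i : ℕ) % 2 = 0 ∧ (j : ℕ) = (i : ℕ) + 1 ∧ (i : ℕ) < 2 * n then 1
  else if (j : ℕ) % 2 = 0 ∧ (i : ℕ) = (j : ℕ) + 1 ∧ (j : ℕ) < 2 * n then -1
  else 0

theorem heisenbergCoeff_last_left {n : ℕ} (j : Fin (2 * n + 1)) :
    heisenbergCoeff n (Fin.last _) j = 0 := by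
  unfold heisenbergCoeff
  rw [if_neg (by simp), if_neg (by simp; omega)]

theorem heisenbergCoeff_left_unique {n : ℕ} {i i' j : Fin (2 * n + 1)}
    (hi : heisenbergCoeff n i j ≠ 0) (hi' : heisenbergCoeff n i' j ≠ 0) : i = i' := by
  unfold heisenbergCoeff at hi hi'
  exact Fin.ext (by split_ifs at hi hi' <;> first | omega | exact absurd rfl ‹(0 : ℝ) ≠ 0›)

theorem exists_heisenbergCoeff_ne_zero {n : ℕ} {i : Fin (2 * n + 1)} (hi : (i : ℕ) < 2 * n) :
    ∃ j, heisenbergCoeff n i j ≠ 0 := by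
  unfold heisenbergCoeff
  rcases Nat.mod_two_eq_zero_or_one i with h | h
  · refine ⟨⟨i + 1, by omega⟩, ?_⟩
    rw [if_pos ⟨h, rfl, hi⟩]
    exact one_ne_zero
  · refine ⟨⟨i - 1, by omega⟩, ?_⟩
    rw [if_neg (by omega), if_pos ⟨by simp; omega, by simp; omega, by simp; omega⟩]
    norm_num

section HeisenbergBasis

variable {V : Type*} [AddCommGroup V] [Module ℝ V] {n : ℕ} {br : V →ₗ[ℝ] V →ₗ[ℝ] V}
  {b : Basis (Fin (2 * n + 1)) ℝ V}

theorem heisenbergBracket_last_left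
    (hb : ∀ i j, br (b i) (b j) = heisenbergCoeff n i j • b (Fin.last _)) :
    br (b (Fin.last _)) = 0 :=
  b.ext fun j => by rw [hb, heisenbergCoeff_last_left, zero_smul, LinearMap.zero_apply]

theorem heisenbergBracket_mem_span
    (hb : ∀ i j, br (b i) (b j) = heisenbergCoeff n i j • b (Fin.last _)) (x y : V) :
    br x y ∈ ℝ ∙ b (Fin.last _) := by
  have : br.compr₂ (ℝ ∙ b (Fin.last _)).mkQ = 0 := b.ext fun i => b.ext fun j => by
    simp [hb, Submodule.Quotient.mk_eq_zero, Submodule.mem_span_singleton_self]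
  simpa [Submodule.Quotient.mk_eq_zero] using LinearMap.congr_fun₂ this x y

theorem heisenbergBracket_basis_right
    (hb : ∀ i j, br (b i) (b j) = heisenbergCoeff n i j • b (Fin.last _)) (x : V)
    (j : Fin (2 * n + 1)) :
    br x (b j) = (∑ i, b.repr x i * heisenbergCoeff n i j) • b (Fin.last _) := by
  conv_lhs => rw [← b.sum_repr x]
  simp only [map_sum, map_smul, LinearMap.sum_apply, LinearMap.smul_apply, hb, smul_smul,
    Finset.sum_smul]

theorem mem_span_of_heisenbergBracket_eq_zero
    (hb : ∀ i j, br (b i) (b j) = heisenbergCoeff n i j • b (Fin.last _)) {x : V}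
    (hx : br x = 0) : x ∈ ℝ ∙ b (Fin.last _) := by
  rw [← Set.image_singleton, b.mem_span_image]
  intro i hi
  by_contra hlast
  obtain ⟨j, hj⟩ := exists_heisenbergCoeff_ne_zero (Fin.val_lt_last hlast)
  have hsum : ∑ i', b.repr x i' * heisenbergCoeff n i' j = b.repr x i * heisenbergCoeff n i j :=
    Finset.sum_eq_single i (fun i' _ hi' => by
      by_cases h : heisenbergCoeff n i' j = 0
      · rw [h, mul_zero]
      · exact absurd (heisenbergCoeff_left_unique h hj) hi') (by simp)
  have := heisenbergBracket_basis_right hb x j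
  rw [hx, hsum, LinearMap.zero_apply, eq_comm, smul_eq_zero] at this
  exact this.elim (mul_ne_zero (Finsupp.mem_support_iff.mp hi) hj) (b.ne_zero _)

end HeisenbergBasis

theorem IsHeisenbergBracket.exists_center {n : ℕ} {br : HV n →ₗ[ℝ] HV n →ₗ[ℝ] HV n}
    (hbr : IsHeisenbergBracket n br) :
    ∃ z : HV n, z ≠ 0 ∧ br z = 0 ∧ (∀ x y, br x y ∈ ℝ ∙ z) ∧ ∀ x, br x = 0 → x ∈ ℝ ∙ z := by
  obtain ⟨b, hb⟩ := hbr
  exact ⟨b (Fin.last _), b.ne_zero _, heisenbergBracket_last_left hb,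
    heisenbergBracket_mem_span hb, fun _ => mem_span_of_heisenbergBracket_eq_zero hb⟩

theorem stmt2_general
    (n k : ℕ)
    (br : HV n →ₗ[ℝ] HV n →ₗ[ℝ] HV n) (hbr : IsHeisenbergBracket n br)
    (A : HV n →ₗ[ℝ] HV n) (hA : IsDerivation br A)
    (α : Fin (k + 1) → ℝ) (hαmono : StrictMono α) (hαpos : ∀ i, 0 < α i)
    (U : Fin (k + 1) → Submodule ℝ (HV n))
    (hU : ∀ i, U i = Module.End.eigenspace A (α i))
    (hUne : ∀ i, U i ≠ ⊥) (hUspan : (⨆ i, U i) = ⊤) :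
    ∀ i j : Fin (k + 1), (i : ℕ) + (j : ℕ) + 2 = k + 1 →
      (∃ x ∈ U i, ∃ y ∈ U j, br x y ≠ 0) ∧ α i + α j = α (Fin.last k) := by
  obtain ⟨z, hz, hcenter, hrange, hrad⟩ := hbr.exists_center
  obtain rfl : U = fun i => Module.End.eigenspace A (α i) := funext hU
  exact bracket_ne_zero_and_add_eq_last_of_add_eq hcenter hrange hrad hz hA hαmono hαpos
    hUne hUspan

theorem stmt2
    (n k : ℕ) (hn : 1 ≤ n) (hk : 1 ≤ k)
    (br : HV n →ₗ[ℝ] HV n →ₗ[ℝ] HV n) (hbr : IsHeisenbergBracket n br)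
    (A : HV n →ₗ[ℝ] HV n) (hA : IsDerivation br A)
    (α : Fin (k + 1) → ℝ) (hαmono : StrictMono α) (hαpos : ∀ i, 0 < α i)
    (U : Fin (k + 1) → Submodule ℝ (HV n))
    (hU : ∀ i, U i = Module.End.eigenspace A (α i))
    (hUne : ∀ i, U i ≠ ⊥) (hUspan : (⨆ i, U i) = ⊤) :
    ∀ i j : Fin (k + 1), (i : ℕ) + (j : ℕ) + 2 = k + 1 →
      (∃ x ∈ U i, ∃ y ∈ U j, br x y ≠ 0) ∧ α i + α j = α (Fin.last k) :=
  stmt2_general n k br hbr A hA α hαmono hαpos U hU hUne hUspan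
end
end

section
/- The trace of A equals (n+1)(α_1 + α_k), and for every x ∈ H_n and every r > 0 the quasimetric ball B(x,r) = { y ∈ H_n : d_A(x,y) < r } satisfies m(B(x,r)) = r^{(n+1)(α_1+α_k)} · m(B(0,1)); in particular the measure m is Ahlfors Q-regular on (H_n, d_A) with Q = (n+1)(α_1+α_k). -/
open scoped BigOperators RealInnerProductSpace ENNReal
open Module Filter

noncomputable section

/-!
Write `U_i` for the eigenspace of `A` for `α_i` and `Z` for the last vector of the standard basis,
so that `ℝ Z` is both the centre and the derived algebra of `𝓗_n`. As `A` is a derivation,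
`[U_i, U_j] ⊆ U_{α_i + α_j}`, while all brackets lie in `ℝ Z`; so a vector of `U_i` outside `ℝ Z`
brackets nontrivially with some `U_j`, forcing `α_i + α_j = β`, the eigenvalue of `Z`. Positivity
makes `β` the largest eigenvalue, with eigenspace `ℝ Z`, and on the other indices `i ↦ j` is an
involution along which the bracket pairs `U_i` nondegenerately with `U_j`, so
`dim U_i = dim U_j`. Summing along the pairing gives `tr A = ∑ dim U_i α_i = (n + 1) β`, and
comparing the partners of the smallest and of the second largest eigenvalue gives
`β = α_1 + α_k`.

Left translations are affine maps whose linear part `id + ½ [x, ·]` is a transvection, so they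
preserve `m`. The dilation acting by `r ^ α_i` on `U_i` multiplies `‖·‖_A` by `r` and has
determinant `r ^ tr A`.
-/

section LinearAlgebra

variable {K V : Type*} [Field K] [AddCommGroup V] [Module K V]

theorem LinearMap.eq_zero_of_iSup_eq_top {W : Type*} [AddCommGroup W] [Module K W]
    {ι : Type*} {U : ι → Submodule K V} (hU : ⨆ i, U i = ⊤) {f : V →ₗ[K] W}
    (hf : ∀ i, ∀ y ∈ U i, f y = 0) : f = 0 :=
  LinearMap.ker_eq_top.mp <| top_le_iff.mp <| hU ▸ iSup_le fun i y hy => hf i y hy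

theorem LinearMap.det_id_add_eq_one_of_apply_mem_span [FiniteDimensional K V] {N : V →ₗ[K] V}
    {Z : V} (hZ : Z ≠ 0) (hN : ∀ y, N y ∈ K ∙ Z) (hNZ : N Z = 0) :
    LinearMap.det (LinearMap.id + N) = 1 := by
  set f : Dual K V := (LinearEquiv.coord K V Z hZ).toLinearMap ∘ₗ N.codRestrict _ hN
  have hf : ∀ y, f y • Z = N y := fun y => LinearEquiv.coord_apply_smul K V Z hZ _
  have htransvection : LinearMap.id + N = LinearMap.transvection f Z := by
    ext y
    rw [transvection.apply, hf]
    rfl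
  rw [htransvection, transvection.det, add_eq_left]
  simp [f, show N.codRestrict _ hN Z = 0 from Subtype.ext hNZ]

section Decomposition

variable [FiniteDimensional K V] {ι : Type*} [Fintype ι] [DecidableEq ι]
  {U : ι → Submodule K V}

theorem LinearMap.trace_eq_sum_finrank_mul (hU : DirectSum.IsInternal U) {F : V →ₗ[K] V}
    {c : ι → K} (hF : ∀ i, ∀ y ∈ U i, F y = c i • y) :
    LinearMap.trace K V F = ∑ i, (finrank K (U i) : K) * c i := by
  have hmaps : ∀ i, Set.MapsTo F (U i) (U i) := fun i y hy => by
    rw [SetLike.mem_coe, hF i y hy]; exact (U i).smul_mem _ hy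
  rw [LinearMap.trace_eq_sum_trace_restrict hU hmaps]
  refine Finset.sum_congr rfl fun i _ => ?_
  have hrestrict : F.restrict (hmaps i) = c i • LinearMap.id := by
    ext y; exact hF i y y.2
  rw [hrestrict, map_smul, LinearMap.trace_id, smul_eq_mul, mul_comm]

theorem LinearMap.det_eq_prod_pow_finrank (hU : DirectSum.IsInternal U) {F : V →ₗ[K] V}
    {c : ι → K} (hF : ∀ i, ∀ y ∈ U i, F y = c i • y) :
    LinearMap.det F = ∏ i, c i ^ finrank K (U i) := by
  let b := hU.collectedBasis fun i => finBasis K (U i)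
  have hdiag : LinearMap.toMatrix b b F = Matrix.diagonal fun p => c p.1 := by
    ext p q
    rw [LinearMap.toMatrix_apply, hF _ _ (hU.collectedBasis_mem _ q), map_smul, b.repr_self,
      Matrix.diagonal_apply, Finsupp.smul_apply, Finsupp.single_apply]
    split_ifs with h₁ h₂ h₂ <;> simp_all
  rw [← LinearMap.det_toMatrix b, hdiag, Matrix.det_diagonal, Fintype.prod_sigma]
  simp

end Decomposition

end LinearAlgebra

section Eigenspaces

variable {K V : Type*} [Field K] [AddCommGroup V] [Module K V] {A : End K V}

theorem Module.End.eq_of_mem_eigenspace {a b : K} {x : V} (ha : x ∈ A.eigenspace a)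
    (hb : x ∈ A.eigenspace b) (hx : x ≠ 0) : a = b := by
  by_contra h
  exact hx (Submodule.disjoint_def.mp (A.eigenspaces_iSupIndep.pairwiseDisjoint h) x ha hb)

theorem Module.End.exists_eq_of_iSup_eigenspace_eq_top_s6 {ι : Type*} {α : ι → K}
    (hspan : ⨆ i, A.eigenspace (α i) = ⊤) {μ : K} {x : V} (hx : x ∈ A.eigenspace μ)
    (hx0 : x ≠ 0) : ∃ i, α i = μ := by
  by_contra! h
  have hdisj := A.eigenspaces_iSupIndep.disjoint_biSup (y := Set.range α) (by simpa using h)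
  rw [iSup_range, hspan, disjoint_top] at hdisj
  exact hx0 ((Submodule.mem_bot K).mp (hdisj ▸ hx))

theorem apply_mem_eigenspace_add_of_derivation {br : V →ₗ[K] V →ₗ[K] V}
    (hA : ∀ x y, A (br x y) = br (A x) y + br x (A y)) {a b : K} {x y : V}
    (hx : x ∈ A.eigenspace a) (hy : y ∈ A.eigenspace b) : br x y ∈ A.eigenspace (a + b) := by
  rw [End.mem_eigenspace_iff] at hx hy ⊢
  rw [hA, hx, hy, map_smul, LinearMap.smul_apply, map_smul, add_smul]

theorem Module.End.isInternal_eigenspace_comp {ι : Type*} [DecidableEq ι] {α : ι → K}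
    (hα : Function.Injective α) (hspan : ⨆ i, A.eigenspace (α i) = ⊤) :
    DirectSum.IsInternal fun i => A.eigenspace (α i) :=
  DirectSum.isInternal_submodule_of_iSupIndep_of_iSup_eq_top
    (A.eigenspaces_iSupIndep.comp hα) hspan

end Eigenspaces

open Finset in
theorem sum_mul_eq_of_pairing {K ι : Type*} [Field K] [CharZero K] [Fintype ι] [DecidableEq ι]
    {d α : ι → K} (hα : Function.Injective α) {i₀ : ι} {n : ℕ}
    (hpair : ∀ i ≠ i₀, ∃ j ≠ i₀, α i + α j = α i₀ ∧ d j = d i)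
    (hd : d i₀ = 1) (hdsum : ∑ i, d i = 2 * n + 1) :
    ∑ i, d i * α i = (n + 1) * α i₀ := by
  choose σ hσ₀ hσα hσd using hpair
  have hσσ : ∀ i (hi : i ≠ i₀), σ (σ i hi) (hσ₀ i hi) = i := fun i hi =>
    hα (by linear_combination hσα _ (hσ₀ i hi) - hσα i hi)
  -- `σ` is an involution of the indices `≠ i₀` reflecting `α` about `α i₀ / 2`.
  have hreflect :
      ∑ i ∈ univ.erase i₀, d i * α i = ∑ i ∈ univ.erase i₀, d i * (α i₀ - α i) :=
    sum_bij' (fun i hi => σ i (ne_of_mem_erase hi)) (fun i hi => σ i (ne_of_mem_erase hi))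
      (fun i hi => mem_erase.mpr ⟨hσ₀ i _, mem_univ _⟩)
      (fun i hi => mem_erase.mpr ⟨hσ₀ i _, mem_univ _⟩)
      (fun i hi => hσσ i _) (fun i hi => hσσ i _)
      (fun i hi => by rw [hσd, ← hσα i (ne_of_mem_erase hi)]; ring)
  have htwice :
      2 * ∑ i ∈ univ.erase i₀, d i * α i = (∑ i ∈ univ.erase i₀, d i) * α i₀ := by
    rw [two_mul, sum_mul]
    nth_rewrite 2 [hreflect]
    rw [← sum_add_distrib]
    exact sum_congr rfl fun i _ => by ring
  rw [← add_sum_erase _ _ (mem_univ i₀), hd] at hdsum ⊢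
  rw [show ∑ i ∈ univ.erase i₀, d i = 2 * n by linear_combination hdsum] at htwice
  linear_combination htwice / 2

theorem Fin.last_eq_add_of_pairing {K : Type*} [Field K] [LinearOrder K] [IsStrictOrderedRing K]
    {k : ℕ} (hk : 1 ≤ k) {α : Fin (k + 1) → K} (hα : Monotone α)
    (hpair : ∀ i ≠ Fin.last k, ∃ j ≠ Fin.last k, α i + α j = α (Fin.last k)) :
    α (Fin.last k) = α 0 + α ⟨k - 1, by omega⟩ := by
  have hle : ∀ j ≠ Fin.last k, α j ≤ α ⟨k - 1, by omega⟩ := fun j hj =>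
    hα (Fin.le_iff_val_le_val.mpr (by have := Fin.val_lt_last hj; simp; omega))
  obtain ⟨j, hj, hj'⟩ := hpair 0 (by simp [Fin.ext_iff]; omega)
  obtain ⟨l, -, hl'⟩ := hpair ⟨k - 1, by omega⟩ (by simp [Fin.ext_iff]; omega)
  linarith [hle j hj, hα (Fin.zero_le l)]

structure IsHeisenbergCenter {K V : Type*} [Field K] [AddCommGroup V] [Module K V]
    (br : V →ₗ[K] V →ₗ[K] V) (Z : V) : Prop where
  ne_zero : Z ≠ 0
  apply_mem_span : ∀ x y, br x y ∈ K ∙ Z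
  apply_right_eq_zero : ∀ x, br x Z = 0
  mem_span_of_forall_apply_eq_zero : ∀ x, (∀ y, br x y = 0) → x ∈ K ∙ Z
  exists_apply_eq : ∃ x y, br x y = Z

namespace IsHeisenbergCenter

section Field

variable {K V : Type*} [Field K] [AddCommGroup V] [Module K V]
  {br : V →ₗ[K] V →ₗ[K] V} {Z : V} (hZ : IsHeisenbergCenter br Z)
  {A : End K V} (hA : ∀ x y, A (br x y) = br (A x) y + br x (A y))
include hZ

theorem finrank_le_of_separates [FiniteDimensional K V] {P Q : Submodule K V}
    (hPQ : ∀ x ∈ P, (∀ y ∈ Q, br x y = 0) → x = 0) : finrank K P ≤ finrank K Q := by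
  have hrange : ∀ (x : P) (y : Q),
      (br.compl₂ Q.subtype ∘ₗ P.subtype) x y ∈ LinearMap.range (K ∙ Z).subtype :=
    fun x y => by rw [Submodule.range_subtype]; exact hZ.apply_mem_span _ _
  let Φ := (br.compl₂ Q.subtype ∘ₗ P.subtype).codRestrict₂ (K ∙ Z).subtype
    Subtype.val_injective hrange
  have hΦ : Function.Injective Φ := by
    rw [← LinearMap.ker_eq_bot, Submodule.eq_bot_iff]
    rintro ⟨x, hx⟩ hΦx
    refine Subtype.ext (hPQ x hx fun y hy => ?_)
    have h := LinearMap.codRestrict₂_apply _ (K ∙ Z).subtype Subtype.val_injective hrange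
      ⟨x, hx⟩ ⟨y, hy⟩
    rw [LinearMap.mem_ker.mp hΦx, LinearMap.zero_apply, map_zero] at h
    exact h.symm
  calc finrank K P ≤ finrank K (Q →ₗ[K] K ∙ Z) :=
        LinearMap.finrank_le_finrank_of_injective hΦ
    _ = finrank K Q := by rw [finrank_linearMap, finrank_span_singleton hZ.ne_zero, mul_one]

include hA

theorem exists_mem_eigenspace : ∃ μ, Z ∈ A.eigenspace μ := by
  obtain ⟨x, y, rfl⟩ := hZ.exists_apply_eq
  have hAZ : A (br x y) ∈ K ∙ br x y := by
    rw [hA]; exact add_mem (hZ.apply_mem_span _ _) (hZ.apply_mem_span _ _)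
  obtain ⟨μ, hμ⟩ := Submodule.mem_span_singleton.mp hAZ
  exact ⟨μ, End.mem_eigenspace_iff.mpr hμ.symm⟩

theorem apply_eq_zero_of_add_ne {μ a b : K} {x y : V} (hZμ : Z ∈ A.eigenspace μ)
    (hx : x ∈ A.eigenspace a) (hy : y ∈ A.eigenspace b) (hab : a + b ≠ μ) : br x y = 0 := by
  by_contra hne
  refine hab (End.eq_of_mem_eigenspace (apply_mem_eigenspace_add_of_derivation hA hx hy) ?_ hne)
  exact (Submodule.span_singleton_le_iff_mem _ _).mpr hZμ (hZ.apply_mem_span x y)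

theorem exists_add_eq {ι : Type*} {α : ι → K} (hspan : ⨆ i, A.eigenspace (α i) = ⊤)
    {μ a : K} {x : V} (hZμ : Z ∈ A.eigenspace μ) (hx : x ∈ A.eigenspace a)
    (hxZ : x ∉ K ∙ Z) : ∃ i, a + α i = μ := by
  by_contra! h
  refine hxZ (hZ.mem_span_of_forall_apply_eq_zero x fun y => ?_)
  rw [LinearMap.eq_zero_of_iSup_eq_top hspan
    fun i y hy => hZ.apply_eq_zero_of_add_ne hA hZμ hx hy (h i), LinearMap.zero_apply]

end Field

section Ordered

variable {K V : Type*} [Field K] [LinearOrder K] [IsStrictOrderedRing K]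
  [AddCommGroup V] [Module K V]
  {br : V →ₗ[K] V →ₗ[K] V} {Z : V} (hZ : IsHeisenbergCenter br Z)
  {A : End K V} (hA : ∀ x y, A (br x y) = br (A x) y + br x (A y))
  {k : ℕ} {α : Fin (k + 1) → K} (hα : StrictMono α) (hpos : ∀ i, 0 < α i)
  (hspan : ⨆ i, A.eigenspace (α i) = ⊤) (hne : ∀ i, A.eigenspace (α i) ≠ ⊥)
include hZ hA hα hpos hspan hne

theorem eigenspace_last_eq_span : A.eigenspace (α (Fin.last k)) = K ∙ Z := by
  obtain ⟨μ, hZμ⟩ := hZ.exists_mem_eigenspace hA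
  obtain ⟨i₀, rfl⟩ := A.exists_eq_of_iSup_eigenspace_eq_top_s6 hspan hZμ hZ.ne_zero
  have hlt : ∀ i x, x ∈ A.eigenspace (α i) → x ∉ K ∙ Z → α i < α i₀ := by
    intro i x hx hxZ
    obtain ⟨j, hj⟩ := hZ.exists_add_eq hA hspan hZμ hx hxZ
    linarith [hpos j]
  have hle : K ∙ Z ≤ A.eigenspace (α i₀) :=
    (Submodule.span_singleton_le_iff_mem _ _).mpr hZμ
  obtain rfl : i₀ = Fin.last k := by
    by_contra h
    obtain ⟨x, hx, hx0⟩ := (Submodule.ne_bot_iff _).mp (hne (Fin.last k))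
    refine (hlt _ x hx fun hxZ => h ?_).not_ge (hα.monotone (Fin.le_last i₀))
    exact hα.injective (End.eq_of_mem_eigenspace (hle hxZ) hx hx0)
  exact le_antisymm (fun x hx => not_not.mp fun hxZ => (hlt _ x hx hxZ).false) hle

theorem exists_add_eq_last {i : Fin (k + 1)} (hi : i ≠ Fin.last k) :
    ∃ j ≠ Fin.last k, α i + α j = α (Fin.last k) := by
  have hlast := hZ.eigenspace_last_eq_span hA hα hpos hspan hne
  obtain ⟨x, hx, hx0⟩ := (Submodule.ne_bot_iff _).mp (hne i)
  have hxZ : x ∉ K ∙ Z := by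
    rw [← hlast]
    exact fun h => hi (hα.injective (End.eq_of_mem_eigenspace hx h hx0))
  have hZl : Z ∈ A.eigenspace (α (Fin.last k)) := hlast ▸ Submodule.mem_span_singleton_self Z
  obtain ⟨j, hj⟩ := hZ.exists_add_eq hA hspan hZl hx hxZ
  refine ⟨j, ?_, hj⟩
  rintro rfl
  linarith [hpos i]

theorem finrank_eigenspace_le [FiniteDimensional K V] {i j : Fin (k + 1)} (hi : i ≠ Fin.last k)
    (hij : α i + α j = α (Fin.last k)) :
    finrank K (A.eigenspace (α i)) ≤ finrank K (A.eigenspace (α j)) := by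
  have hlast := hZ.eigenspace_last_eq_span hA hα hpos hspan hne
  have hZl : Z ∈ A.eigenspace (α (Fin.last k)) := hlast ▸ Submodule.mem_span_singleton_self Z
  refine hZ.finrank_le_of_separates fun x hx hxj => ?_
  have hbr : br x = 0 := LinearMap.eq_zero_of_iSup_eq_top hspan fun l y hy => by
    by_cases hl : l = j
    · exact hxj y (hl ▸ hy)
    · exact hZ.apply_eq_zero_of_add_ne hA hZl hx hy fun h => hl (hα.injective (by linarith))
  have hxl : x ∈ A.eigenspace (α (Fin.last k)) :=
    hlast ▸ hZ.mem_span_of_forall_apply_eq_zero x fun y => by rw [hbr, LinearMap.zero_apply]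
  by_contra hx0
  exact hi (hα.injective (End.eq_of_mem_eigenspace hx hxl hx0))

theorem sum_finrank_mul_eq [FiniteDimensional K V] {n : ℕ} (hdim : finrank K V = 2 * n + 1) :
    ∑ i, (finrank K (A.eigenspace (α i)) : K) * α i = (n + 1) * α (Fin.last k) := by
  have hdsum : ∑ i, (finrank K (A.eigenspace (α i)) : K) = 2 * n + 1 := by
    have h := LinearMap.trace_eq_sum_finrank_mul (A.isInternal_eigenspace_comp hα.injective hspan)
      (F := LinearMap.id) (c := 1) fun i y _ => (one_smul K y).symm
    rw [LinearMap.trace_id, hdim] at h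
    simpa using h.symm
  have hd : (finrank K (A.eigenspace (α (Fin.last k))) : K) = 1 := by
    rw [hZ.eigenspace_last_eq_span hA hα hpos hspan hne, finrank_span_singleton hZ.ne_zero,
      Nat.cast_one]
  refine sum_mul_eq_of_pairing hα.injective (fun i hi => ?_) hd hdsum
  obtain ⟨j, hj, hij⟩ := hZ.exists_add_eq_last hA hα hpos hspan hne hi
  refine ⟨j, hj, hij, ?_⟩
  exact_mod_cast le_antisymm (hZ.finrank_eigenspace_le hA hα hpos hspan hne hj (by linarith))
    (hZ.finrank_eigenspace_le hA hα hpos hspan hne hi hij)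

end Ordered

end IsHeisenbergCenter

section StandardBasis

variable {K V : Type*} [Field K] [AddCommGroup V] [Module K V] {n : ℕ}

def symplecticCoeff (K : Type*) [Field K] (n : ℕ) (i j : Fin (2 * n + 1)) : K :=
  if (i : ℕ) % 2 = 0 ∧ (j : ℕ) = (i : ℕ) + 1 ∧ (i : ℕ) < 2 * n then 1
  else if (j : ℕ) % 2 = 0 ∧ (i : ℕ) = (j : ℕ) + 1 ∧ (j : ℕ) < 2 * n then -1
  else 0

theorem symplecticCoeff_last_right (i : Fin (2 * n + 1)) :
    symplecticCoeff K n i (Fin.last (2 * n)) = 0 := by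
  simp only [symplecticCoeff, Fin.val_last]
  split_ifs <;> first | rfl | omega

theorem exists_symplecticCoeff_ne_zero {i : Fin (2 * n + 1)} (hi : (i : ℕ) < 2 * n) :
    ∃ j, symplecticCoeff K n i j ≠ 0 ∧ ∀ l ≠ i, symplecticCoeff K n l j = 0 := by
  have hmod := Nat.mod_two_eq_zero_or_one (i : ℕ)
  refine ⟨⟨if (i : ℕ) % 2 = 0 then i + 1 else i - 1, by split_ifs <;> omega⟩, ?_,
    fun l hl => ?_⟩
  · simp only [symplecticCoeff]
    split_ifs <;> norm_num <;> omega
  · have := Fin.val_ne_of_ne hl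
    simp only [symplecticCoeff]
    split_ifs <;> first | rfl | omega

variable {br : V →ₗ[K] V →ₗ[K] V} (b : Basis (Fin (2 * n + 1)) K V)
  (hb : ∀ i j, br (b i) (b j) = symplecticCoeff K n i j • b (Fin.last (2 * n)))
include hb

theorem apply_basis_eq_smul (x : V) (j : Fin (2 * n + 1)) :
    br x (b j) = (∑ l, b.repr x l * symplecticCoeff K n l j) • b (Fin.last (2 * n)) := by
  conv_lhs => rw [← b.sum_repr x]
  simp only [map_sum, map_smul, LinearMap.sum_apply, LinearMap.smul_apply, hb, smul_smul,
    Finset.sum_smul]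

theorem isHeisenbergCenter_of_basis (hn : 1 ≤ n) :
    IsHeisenbergCenter br (b (Fin.last (2 * n))) where
  ne_zero := b.ne_zero _
  apply_mem_span x y := by
    rw [← b.sum_repr y, map_sum]
    refine Submodule.sum_mem _ fun j _ => ?_
    rw [map_smul, apply_basis_eq_smul b hb]
    exact Submodule.smul_mem _ _ (Submodule.smul_mem _ _ (Submodule.mem_span_singleton_self _))
  apply_right_eq_zero x := by
    simp [apply_basis_eq_smul b hb, symplecticCoeff_last_right]
  mem_span_of_forall_apply_eq_zero x hx := by
    have hcoord : ∀ i ≠ Fin.last (2 * n), b.repr x i = 0 := fun i hi => by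
      obtain ⟨j, hj, hl⟩ := exists_symplecticCoeff_ne_zero (K := K) (Fin.val_lt_last hi)
      have h := hx (b j)
      rw [apply_basis_eq_smul b hb, Finset.sum_eq_single i
        (fun l _ hli => by rw [hl l hli, mul_zero]) (by simp), smul_eq_zero] at h
      simpa [hj, b.ne_zero] using h
    rw [← b.sum_repr x, Finset.sum_eq_single (Fin.last (2 * n))
      (fun i _ hi => by rw [hcoord i hi, zero_smul]) (by simp)]
    exact Submodule.smul_mem _ _ (Submodule.mem_span_singleton_self _)
  exists_apply_eq := ⟨b ⟨0, by omega⟩, b ⟨1, by omega⟩, by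
    rw [hb, symplecticCoeff, if_pos ⟨rfl, rfl, by simp; omega⟩, one_smul]⟩

end StandardBasis

section OrthogonalDecomposition

variable {E : Type*} [NormedAddCommGroup E] [InnerProductSpace ℝ E] [FiniteDimensional ℝ E]
  {ι : Type*} {U : ι → Submodule ℝ E}

def gradedSMul [Fintype ι] (U : ι → Submodule ℝ E) (c : ι → ℝ) : E →ₗ[ℝ] E :=
  ∑ i, c i • ((U i).starProjection : E →ₗ[ℝ] E)

variable (hU : OrthogonalFamily ℝ (fun i => U i) fun i => (U i).subtypeₗᵢ)
include hU

theorem OrthogonalFamily.starProjection_apply_of_mem {i j : ι} (hij : i ≠ j) {y : E}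
    (hy : y ∈ U j) : (U i).starProjection y = 0 :=
  (U i).starProjection_apply_eq_zero_iff.mpr ((hU.isOrtho hij).symm.le hy)

variable [Fintype ι]

theorem gradedSMul_apply_of_mem (c : ι → ℝ) {j : ι} {y : E} (hy : y ∈ U j) :
    gradedSMul U c y = c j • y := by
  classical
  simp only [gradedSMul, LinearMap.sum_apply, LinearMap.smul_apply, ContinuousLinearMap.coe_coe]
  rw [Finset.sum_eq_single j
    (fun i _ hij => by rw [hU.starProjection_apply_of_mem hij hy, smul_zero]) (by simp),
    Submodule.starProjection_eq_self_iff.mpr hy]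

theorem starProjection_gradedSMul (c : ι → ℝ) (j : ι) (x : E) :
    (U j).starProjection (gradedSMul U c x) = c j • (U j).starProjection x := by
  classical
  simp only [gradedSMul, LinearMap.sum_apply, LinearMap.smul_apply, ContinuousLinearMap.coe_coe,
    map_sum, map_smul]
  rw [Finset.sum_eq_single j (fun i _ hij => by
      rw [hU.starProjection_apply_of_mem hij.symm ((U i).starProjection_apply_mem x), smul_zero])
    (by simp), Submodule.starProjection_eq_self_iff.mpr ((U j).starProjection_apply_mem x)]

end OrthogonalDecomposition

section HeisenbergGroup

variable {n k : ℕ}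

theorem normA_gradedSMul {α : Fin (k + 1) → ℝ} (hα : ∀ i, 0 < α i)
    {U : Fin (k + 1) → Submodule ℝ (HV n)}
    (hU : OrthogonalFamily ℝ (fun i => U i) fun i => (U i).subtypeₗᵢ) {s : ℝ} (hs : 0 < s)
    (x : HV n) : normA α U (gradedSMul U (fun i => s ^ α i) x) = s * normA α U x := by
  simp only [normA, Submodule.coe_orthogonalProjectionOnto_apply, starProjection_gradedSMul hU,
    Finset.mul_sum]
  refine Finset.sum_congr rfl fun i _ => ?_
  rw [norm_smul, Real.norm_of_nonneg (by positivity), Real.mul_rpow (by positivity) (norm_nonneg _),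
    ← Real.rpow_mul hs.le, mul_inv_cancel₀ (hα i).ne', Real.rpow_one]

theorem volume_normA_lt {α : Fin (k + 1) → ℝ} (hα : ∀ i, 0 < α i)
    {U : Fin (k + 1) → Submodule ℝ (HV n)}
    (hU : OrthogonalFamily ℝ (fun i => U i) fun i => (U i).subtypeₗᵢ)
    (hint : DirectSum.IsInternal U) {r : ℝ} (hr : 0 < r) :
    MeasureTheory.volume {z : HV n | normA α U z < r} =
      ENNReal.ofReal (r ^ ∑ i, (finrank ℝ (U i) : ℝ) * α i) *
        MeasureTheory.volume {z : HV n | normA α U z < 1} := by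
  set δ := gradedSMul U fun i => r⁻¹ ^ α i
  have hdet : LinearMap.det δ = r⁻¹ ^ ∑ i, (finrank ℝ (U i) : ℝ) * α i := by
    rw [LinearMap.det_eq_prod_pow_finrank hint fun i y hy => gradedSMul_apply_of_mem hU _ hy,
      Real.rpow_sum_of_pos (inv_pos.mpr hr)]
    refine Finset.prod_congr rfl fun i _ => ?_
    rw [← Real.rpow_natCast, ← Real.rpow_mul (inv_pos.mpr hr).le, mul_comm]
  have hball : {z : HV n | normA α U z < r} = δ ⁻¹' {z | normA α U z < 1} := by
    ext z
    simp only [Set.mem_ofPred_eq, Set.mem_preimage, δ, normA_gradedSMul hα hU (inv_pos.mpr hr),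
      inv_mul_lt_iff₀ hr, mul_one]
  rw [hball, MeasureTheory.Measure.addHaar_preimage_linearMap _ (hdet ▸ by positivity), hdet,
    ← Real.inv_rpow (inv_pos.mpr hr).le, inv_inv, abs_of_pos (by positivity)]

theorem volume_preimage_hMul {br : HV n →ₗ[ℝ] HV n →ₗ[ℝ] HV n} {Z : HV n}
    (hZ : IsHeisenbergCenter br Z) (g : HV n) (S : Set (HV n)) :
    MeasureTheory.volume (hMul br g ⁻¹' S) = MeasureTheory.volume S := by
  set L := LinearMap.id + (2⁻¹ : ℝ) • br g
  have hL : LinearMap.det L = 1 :=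
    LinearMap.det_id_add_eq_one_of_apply_mem_span hZ.ne_zero
      (fun y => Submodule.smul_mem _ _ (hZ.apply_mem_span g y))
      (by rw [LinearMap.smul_apply, hZ.apply_right_eq_zero, smul_zero])
  have hmul : hMul br g = (fun h => g + h) ∘ L := by
    ext1 y
    simp only [hMul, L, Function.comp_apply, LinearMap.add_apply, LinearMap.id_apply,
      LinearMap.smul_apply, add_assoc]
  rw [hmul, Set.preimage_comp, MeasureTheory.Measure.addHaar_preimage_linearMap _ (by simp [hL]),
    MeasureTheory.measure_preimage_add, hL, inv_one, abs_one, ENNReal.ofReal_one, one_mul]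

end HeisenbergGroup

theorem stmt6
    (n k : ℕ) (hn : 1 ≤ n) (hk : 1 ≤ k)
    (br : HV n →ₗ[ℝ] HV n →ₗ[ℝ] HV n) (hbr : IsHeisenbergBracket n br)
    (A : HV n →ₗ[ℝ] HV n) (hA : IsDerivation br A)
    (α : Fin (k + 1) → ℝ) (hαmono : StrictMono α) (hαpos : ∀ i, 0 < α i)
    (U : Fin (k + 1) → Submodule ℝ (HV n))
    (hU : ∀ i, U i = Module.End.eigenspace A (α i))
    (hUne : ∀ i, U i ≠ ⊥) (hUspan : (⨆ i, U i) = ⊤)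
    (hUorth : ∀ i j, i ≠ j → ∀ x ∈ U i, ∀ y ∈ U j, (inner ℝ x y : ℝ) = 0) :
    LinearMap.trace ℝ (HV n) A = ((n : ℝ) + 1) * (α 0 + α ⟨k - 1, by omega⟩) ∧
    ∀ (x : HV n) (r : ℝ), 0 < r →
      MeasureTheory.volume {y : HV n | qd br α U x y < r} =
        ENNReal.ofReal (r ^ (((n : ℝ) + 1) * (α 0 + α ⟨k - 1, by omega⟩))) *
          MeasureTheory.volume {y : HV n | qd br α U 0 y < 1} := by
  obtain ⟨b, hb⟩ := hbr
  have hZ := isHeisenbergCenter_of_basis b hb hn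
  obtain rfl : U = fun i => Module.End.eigenspace A (α i) := funext hU
  have horth : OrthogonalFamily ℝ (fun i => Module.End.eigenspace A (α i))
      fun i => (Module.End.eigenspace A (α i)).subtypeₗᵢ :=
    fun i j hij x y => hUorth i j hij x x.2 y y.2
  have hint := Module.End.isInternal_eigenspace_comp hαmono.injective hUspan
  have hQ : ∑ i, (finrank ℝ (Module.End.eigenspace A (α i)) : ℝ) * α i =
      ((n : ℝ) + 1) * (α 0 + α ⟨k - 1, by omega⟩) := by
    rw [hZ.sum_finrank_mul_eq hA hαmono hαpos hUspan hUne (finrank_euclideanSpace_fin),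
      Fin.last_eq_add_of_pairing hk hαmono.monotone
        fun i hi => hZ.exists_add_eq_last hA hαmono hαpos hUspan hUne hi]
  have htrace := LinearMap.trace_eq_sum_finrank_mul hint fun i y hy =>
    Module.End.mem_eigenspace_iff.mp hy
  refine ⟨htrace.trans hQ, fun x r hr => ?_⟩
  rw [← hQ]
  change MeasureTheory.volume (hMul br (-x) ⁻¹' {z | normA α _ z < r}) =
    _ * MeasureTheory.volume (hMul br (-0) ⁻¹' {z | normA α _ z < 1})
  rw [volume_preimage_hMul hZ, volume_preimage_hMul hZ, volume_normA_lt hαpos horth hint hr]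
end
end

section
/- Suppose k ≥ 2 and let H = U_1 ⊕ ⋯ ⊕ U_{k-1} ⊕ 𝓩(𝓗_n), a subgroup of (H_n, *). Two left cosets g*U_1 and g'*U_1 of U_1 lie in the same left coset of H (i.e., g' ∈ g*H) if and only if the Hausdorff distance between g*U_1 and g'*U_1 with respect to d_A is finite. -/
open scoped BigOperators RealInnerProductSpace ENNReal
open Module Filter

noncomputable section

/-!
Put `s = g⁻¹ g'`. As `A` is a derivation, `[U i, U j]` lies in the eigenspace of `α i + α j`, and
all brackets are central. Hence the centre is the top eigenspace `U top`, `[U i, U j] = 0` unless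
`α i + α j = α top`, and comparing the bracket partners of the bottom eigenspace `U lo` and of the
second-highest one `U hi` gives `α hi + α lo = α top`. So `U lo` brackets only with `U hi`, the
subgroup `H` is the orthogonal complement of `U hi`, and for `u, u' ∈ U lo`
  `(g u)⁻¹ (g' u') = s + (u' - u) + ½ [h, u + u']`,  `h` the `U hi`-component of `s`.
If `h = 0`, then `g u` and `g' u` are at distance `‖s‖_A` for every `u`. Otherwise `[h, e] ≠ 0` for
some `e ∈ U lo`; if `g (t e)` is within `R` of `g' u'`, the `U lo`-component of the product bounds
`u' - t e`, and then its central component is `t [h, e]` up to a bounded error: absurd for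
large `t`.
-/

theorem Submodule.linearMap_eq_zero_of_iSup_eq_top {ι R M N : Type*} [Semiring R]
    [AddCommMonoid M] [Module R M] [AddCommMonoid N] [Module R N] {U : ι → Submodule R M}
    (hUspan : ⨆ i, U i = ⊤) {f : M →ₗ[R] N} (hf : ∀ i, ∀ y ∈ U i, f y = 0) : f = 0 := by
  have : ⊤ ≤ LinearMap.ker f := hUspan ▸ iSup_le fun i y hy => hf i y hy
  exact LinearMap.ext fun y => this Submodule.mem_top

theorem Module.End.eigenspace_eq_bot_of_forall_ne {ι R M : Type*} [CommRing R] [IsDomain R]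
    [AddCommGroup M] [Module R M] [IsTorsionFree R M] {A : Module.End R M} {α : ι → R}
    (hUspan : ⨆ i, A.eigenspace (α i) = ⊤) {μ : R} (hμ : ∀ i, α i ≠ μ) : A.eigenspace μ = ⊥ := by
  have hle : ⊤ ≤ ⨆ (ν) (_ : ν ≠ μ), A.eigenspace ν :=
    hUspan ▸ iSup_le fun i => le_iSup₂ (f := fun ν (_ : ν ≠ μ) => A.eigenspace ν) (α i) (hμ i)
  exact disjoint_top.mp ((A.eigenspaces_iSupIndep μ).mono_right hle)

theorem eq_zero_of_forall_norm_smul_le {E : Type*} [NormedAddCommGroup E] [NormedSpace ℝ E]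
    {v : E} {C : ℝ} (h : ∀ c : ℝ, ‖c • v‖ ≤ C) : v = 0 := by
  by_contra hv
  have hv' : 0 < ‖v‖ := norm_pos_iff.mpr hv
  have := h ((|C| + 1) / ‖v‖)
  rw [norm_smul, Real.norm_eq_abs, abs_of_nonneg (by positivity), div_mul_cancel₀ _ hv'.ne']
    at this
  linarith [le_abs_self C]

section Orthogonal

variable {ι E : Type*} [NormedAddCommGroup E] [InnerProductSpace ℝ E] {U : ι → Submodule ℝ E}

theorem eq_zero_of_mem_of_mem (hUorth : ∀ i j, i ≠ j → ∀ x ∈ U i, ∀ y ∈ U j, ⟪x, y⟫ = 0)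
    {i j : ι} (hij : i ≠ j) {x : E} (hi : x ∈ U i) (hj : x ∈ U j) : x = 0 :=
  inner_self_eq_zero.mp (hUorth i j hij x hi x hj)

theorem le_orthogonal_of_ne (hUorth : ∀ i j, i ≠ j → ∀ x ∈ U i, ∀ y ∈ U j, ⟪x, y⟫ = 0)
    {i j : ι} (hij : i ≠ j) : U i ≤ (U j)ᗮ :=
  fun x hx => (Submodule.mem_orthogonal _ _).mpr fun y hy => hUorth j i hij.symm y hy x hx

theorem starProjection_eq_zero_of_mem [∀ i, (U i).HasOrthogonalProjection]
    (hUorth : ∀ i j, i ≠ j → ∀ x ∈ U i, ∀ y ∈ U j, ⟪x, y⟫ = 0)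
    {i j : ι} (hij : i ≠ j) {x : E} (hx : x ∈ U j) : (U i).starProjection x = 0 :=
  (Submodule.starProjection_apply_eq_zero_iff _).mpr (le_orthogonal_of_ne hUorth hij.symm hx)

theorem sum_starProjection [Fintype ι] [∀ i, CompleteSpace (U i)]
    (hUorth : ∀ i j, i ≠ j → ∀ x ∈ U i, ∀ y ∈ U j, ⟪x, y⟫ = 0) (hUspan : ⨆ i, U i = ⊤) (x : E) :
    ∑ i, (U i).starProjection x = x :=
  OrthogonalFamily.sum_projection_of_mem_iSup
    (fun i j hij v w => hUorth i j hij v v.2 w w.2) x (hUspan ▸ Submodule.mem_top)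

end Orthogonal

namespace IsHeisenbergBracket

variable {n : ℕ} {br : HV n →ₗ[ℝ] HV n →ₗ[ℝ] HV n}

theorem apply_swap (hbr : IsHeisenbergBracket n br) (x y : HV n) : br y x = -br x y := by
  obtain ⟨b, hb⟩ := hbr
  have : br.flip = -br := b.ext fun i => b.ext fun j => by
    simp only [LinearMap.flip_apply, LinearMap.neg_apply, hb, ← neg_smul]
    congr 1
    split_ifs <;> first | omega | norm_num
  exact LinearMap.congr_fun (LinearMap.congr_fun this x) y

theorem apply_self (hbr : IsHeisenbergBracket n br) (x : HV n) : br x x = 0 := by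
  have h := hbr.apply_swap x x
  rw [eq_neg_iff_add_eq_zero, ← two_smul ℝ] at h
  exact (smul_eq_zero.mp h).resolve_left two_ne_zero

theorem exists_ker_eq_span_and_apply_mem (hbr : IsHeisenbergBracket n br) :
    ∃ z : HV n, LinearMap.ker br = ℝ ∙ z ∧ ∀ x y, br x y ∈ ℝ ∙ z := by
  obtain ⟨b, hb⟩ := hbr
  set c : Fin (2 * n + 1) := ⟨2 * n, by omega⟩
  have hc : (c : ℕ) = 2 * n := rfl
  have hmem : ∀ x y, br x y ∈ ℝ ∙ b c := fun x y => by
    rw [← b.sum_repr x, ← b.sum_repr y]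
    simp only [map_sum, map_smul, LinearMap.sum_apply, LinearMap.smul_apply, hb]
    exact Submodule.sum_mem _ fun i _ => Submodule.smul_mem _ _ <| Submodule.sum_mem _ fun j _ =>
      Submodule.smul_mem _ _ <| Submodule.smul_mem _ _ <| Submodule.mem_span_singleton_self _
  have partner : ∀ i : Fin (2 * n + 1), (i : ℕ) < 2 * n → ∃ j : Fin (2 * n + 1), ∃ a : ℝ,
      a ≠ 0 ∧ ∀ i', br (b i') (b j) = if i' = i then a • b c else 0 := by
    intro i hi
    by_cases hpar : (i : ℕ) % 2 = 0
    · refine ⟨⟨i + 1, by omega⟩, 1, one_ne_zero, fun i' => ?_⟩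
      rw [hb]
      simp only [Fin.ext_iff]
      split_ifs <;> first | omega | simp
    · refine ⟨⟨i - 1, by omega⟩, -1, by norm_num, fun i' => ?_⟩
      rw [hb]
      simp only [Fin.ext_iff]
      split_ifs <;> first | omega | simp
  refine ⟨b c, le_antisymm (fun x hx => ?_) ?_, hmem⟩
  · have hcoord : ∀ i, i ≠ c → b.repr x i = 0 := by
      intro i hic
      obtain ⟨j, a, ha, hj⟩ :=
        partner i (by have := i.2; have : (i : ℕ) ≠ 2 * n := fun h => hic (Fin.ext h); omega)
      have h0 : br x (b j) = 0 := by rw [LinearMap.mem_ker.mp hx]; rfl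
      rw [← b.sum_repr x] at h0
      simp only [map_sum, map_smul, LinearMap.sum_apply, LinearMap.smul_apply, hj, smul_ite,
        smul_zero, Finset.sum_ite_eq', Finset.mem_univ, if_true, smul_smul] at h0
      simpa [ha, b.ne_zero] using h0
    rw [← b.sum_repr x, Finset.sum_eq_single c (fun i _ hi => by rw [hcoord i hi, zero_smul])
      (by simp)]
    exact Submodule.smul_mem _ _ (Submodule.mem_span_singleton_self _)
  · refine (Submodule.span_singleton_le_iff_mem _ _).mpr (LinearMap.mem_ker.mpr ?_)
    refine b.ext fun j => ?_
    rw [hb, LinearMap.zero_apply, if_neg (by omega), if_neg (by omega), zero_smul]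

theorem apply_mem_ker (hbr : IsHeisenbergBracket n br) (x y : HV n) :
    br x y ∈ LinearMap.ker br := by
  obtain ⟨z, hker, hmem⟩ := hbr.exists_ker_eq_span_and_apply_mem
  exact hker ▸ hmem x y

theorem apply_apply_left (hbr : IsHeisenbergBracket n br) (x y c : HV n) :
    br (br x y) c = 0 := by
  rw [LinearMap.mem_ker.mp (hbr.apply_mem_ker x y), LinearMap.zero_apply]

theorem apply_apply_right (hbr : IsHeisenbergBracket n br) (x y c : HV n) :
    br c (br x y) = 0 := by
  rw [hbr.apply_swap, hbr.apply_apply_left, neg_zero]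

theorem hMul_neg_hMul (hbr : IsHeisenbergBracket n br) (g x : HV n) :
    hMul br (-g) (hMul br g x) = x := by
  simp only [hMul, map_add, map_neg, map_smul, LinearMap.neg_apply, hbr.apply_apply_right,
    hbr.apply_self, smul_zero, neg_zero, add_zero]
  module

theorem mem_leftCoset_iff (hbr : IsHeisenbergBracket n br) {S : Set (HV n)} {g g' : HV n} :
    g' ∈ leftCoset br g S ↔ hMul br (-g) g' ∈ S := by
  refine ⟨?_, fun h => ⟨_, h, by simpa using hbr.hMul_neg_hMul (-g) g'⟩⟩
  rintro ⟨x, hx, rfl⟩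
  rwa [hbr.hMul_neg_hMul]

theorem hMul_neg_hMul_hMul (hbr : IsHeisenbergBracket n br) (g g' u u' : HV n) :
    hMul br (-(hMul br g u)) (hMul br g' u') =
      hMul br (-g) g' + (u' - u) + (2⁻¹ : ℝ) • (br (hMul br (-g) g') (u + u') - br u u') := by
  simp only [hMul, map_add, map_neg, map_smul, LinearMap.add_apply, LinearMap.neg_apply,
    LinearMap.smul_apply, hbr.apply_apply_left, hbr.apply_apply_right, hbr.apply_swap u g,
    hbr.apply_swap u g', smul_zero, neg_zero, add_zero, smul_neg, neg_neg]
  module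

end IsHeisenbergBracket

section Grading

variable {ι : Type*} {n : ℕ} {br : HV n →ₗ[ℝ] HV n →ₗ[ℝ] HV n} {A : HV n →ₗ[ℝ] HV n}
  {α : ι → ℝ} {U : ι → Submodule ℝ (HV n)} {lo hi top : ι}

theorem IsDerivation.apply_mem_eigenspace_add (hA : IsDerivation br A) {a b : ℝ} {x y : HV n}
    (hx : x ∈ Module.End.eigenspace A a) (hy : y ∈ Module.End.eigenspace A b) :
    br x y ∈ Module.End.eigenspace A (a + b) := by
  rw [Module.End.mem_eigenspace_iff] at *
  rw [hA, hx, hy, map_smul, LinearMap.smul_apply, map_smul, add_smul]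

theorem IsDerivation.le_ker_of_forall_le (hA : IsDerivation br A)
    (hU : ∀ i, U i = Module.End.eigenspace A (α i)) (hUspan : ⨆ i, U i = ⊤) (hαpos : ∀ i, 0 < α i)
    (htop : ∀ i, α i ≤ α top) : U top ≤ LinearMap.ker br := by
  intro x hx
  refine LinearMap.mem_ker.mpr (Submodule.linearMap_eq_zero_of_iSup_eq_top hUspan fun j y hy => ?_)
  have hspan : ⨆ i, Module.End.eigenspace A (α i) = ⊤ := by simpa only [hU] using hUspan
  have hmem := hA.apply_mem_eigenspace_add (hU top ▸ hx) (hU j ▸ hy)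
  rwa [Module.End.eigenspace_eq_bot_of_forall_ne hspan
    (fun i => (lt_add_of_le_of_pos (htop i) (hαpos j)).ne), Submodule.mem_bot] at hmem

namespace IsHeisenbergBracket

theorem ker_eq_of_forall_le (hbr : IsHeisenbergBracket n br) (hA : IsDerivation br A)
    (hU : ∀ i, U i = Module.End.eigenspace A (α i)) (hUspan : ⨆ i, U i = ⊤) (hαpos : ∀ i, 0 < α i)
    (htop : ∀ i, α i ≤ α top) (hne : U top ≠ ⊥) : LinearMap.ker br = U top := by
  obtain ⟨z, hker, -⟩ := hbr.exists_ker_eq_span_and_apply_mem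
  have hle := hA.le_ker_of_forall_le hU hUspan hαpos htop
  obtain ⟨x, hx, hx0⟩ := (Submodule.ne_bot_iff _).mp hne
  obtain ⟨a, rfl⟩ := Submodule.mem_span_singleton.mp (hker ▸ hle hx)
  have ha : a ≠ 0 := by rintro rfl; simp at hx0
  refine le_antisymm ?_ hle
  rw [hker, ← Submodule.span_singleton_smul_eq ha.isUnit]
  exact (Submodule.span_singleton_le_iff_mem _ _).mpr hx

theorem apply_eq_zero_of_add_ne (hbr : IsHeisenbergBracket n br) (hA : IsDerivation br A)
    (hU : ∀ i, U i = Module.End.eigenspace A (α i)) (hker : LinearMap.ker br = U top) {i j : ι}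
    {x y : HV n} (hx : x ∈ U i) (hy : y ∈ U j) (h : α i + α j ≠ α top) : br x y = 0 :=
  Submodule.disjoint_def.mp ((Module.End.eigenspaces_iSupIndep A).pairwiseDisjoint h) _
    (hA.apply_mem_eigenspace_add (hU i ▸ hx) (hU j ▸ hy)) (hU top ▸ hker ▸ hbr.apply_mem_ker x y)

theorem exists_apply_ne_zero (hbr : IsHeisenbergBracket n br) (hA : IsDerivation br A)
    (hU : ∀ i, U i = Module.End.eigenspace A (α i)) (hUspan : ⨆ i, U i = ⊤)
    (hker : LinearMap.ker br = U top) {i : ι} {x : HV n} (hx : x ∈ U i) (hxtop : x ∉ U top) :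
    ∃ j, ∃ y ∈ U j, br x y ≠ 0 ∧ α i + α j = α top := by
  by_contra! h
  refine hxtop (hker ▸ LinearMap.mem_ker.mpr ?_)
  exact Submodule.linearMap_eq_zero_of_iSup_eq_top hUspan fun j y hy => by_contra fun h0 =>
    h0 (hbr.apply_eq_zero_of_add_ne hA hU hker hx hy (h j y hy h0))

theorem add_eq_of_forall_lt (hbr : IsHeisenbergBracket n br) (hA : IsDerivation br A)
    (hU : ∀ i, U i = Module.End.eigenspace A (α i)) (hUspan : ⨆ i, U i = ⊤)
    (hUorth : ∀ i j, i ≠ j → ∀ x ∈ U i, ∀ y ∈ U j, ⟪x, y⟫ = 0) (hαpos : ∀ i, 0 < α i)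
    (hker : LinearMap.ker br = U top) (hlo : ∀ i, α lo ≤ α i)
    (hhi : ∀ i, i ≠ hi → i ≠ top → α i < α hi) (hlo_top : lo ≠ top) (hhi_top : hi ≠ top)
    (hUlo : U lo ≠ ⊥) (hUhi : U hi ≠ ⊥) : α hi + α lo = α top := by
  obtain ⟨x, hx, hx0⟩ := (Submodule.ne_bot_iff _).mp hUhi
  obtain ⟨j, -, -, -, hj⟩ := hbr.exists_apply_ne_zero hA hU hUspan hker hx
    fun h => hx0 (eq_zero_of_mem_of_mem hUorth hhi_top hx h)
  obtain ⟨u, hu, hu0⟩ := (Submodule.ne_bot_iff _).mp hUlo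
  obtain ⟨p, -, -, -, hp⟩ := hbr.exists_apply_ne_zero hA hU hUspan hker hu
    fun h => hu0 (eq_zero_of_mem_of_mem hUorth hlo_top hu h)
  have hp_top : p ≠ top := by rintro rfl; linarith [hαpos lo]
  have hp_hi : α p ≤ α hi := by
    by_cases h : p = hi
    · rw [h]
    · exact (hhi p h hp_top).le
  linarith [hlo j]

theorem apply_eq_zero_of_ne (hbr : IsHeisenbergBracket n br) (hA : IsDerivation br A)
    (hU : ∀ i, U i = Module.End.eigenspace A (α i)) (hker : LinearMap.ker br = U top)
    (hhi : ∀ i, i ≠ hi → i ≠ top → α i < α hi) (hadd : α hi + α lo = α top)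
    {i : ι} (hi_ne : i ≠ hi) {x u : HV n} (hx : x ∈ U i) (hu : u ∈ U lo) : br x u = 0 := by
  by_cases hi_top : i = top
  · subst hi_top
    rw [LinearMap.mem_ker.mp (hker ▸ hx : x ∈ LinearMap.ker br), LinearMap.zero_apply]
  · exact hbr.apply_eq_zero_of_add_ne hA hU hker hx hu (by linarith [hhi i hi_ne hi_top])

theorem eq_zero_of_forall_apply_eq_zero (hbr : IsHeisenbergBracket n br) (hA : IsDerivation br A)
    (hU : ∀ i, U i = Module.End.eigenspace A (α i)) (hUspan : ⨆ i, U i = ⊤)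
    (hUorth : ∀ i j, i ≠ j → ∀ x ∈ U i, ∀ y ∈ U j, ⟪x, y⟫ = 0)
    (hker : LinearMap.ker br = U top) (hhi_top : hi ≠ top) (hadd : α hi + α lo = α top)
    {x : HV n} (hx : x ∈ U hi) (h : ∀ u ∈ U lo, br x u = 0) : x = 0 := by
  by_contra hx0
  obtain ⟨j, y, hy, hxy, hj⟩ := hbr.exists_apply_ne_zero hA hU hUspan hker hx
    fun h => hx0 (eq_zero_of_mem_of_mem hUorth hhi_top hx h)
  have hjlo : U j = U lo := by rw [hU, hU, show α j = α lo by linarith]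
  exact hxy (h y (hjlo ▸ hy))

theorem apply_eq_apply_starProjection [Fintype ι] (hbr : IsHeisenbergBracket n br)
    (hA : IsDerivation br A) (hU : ∀ i, U i = Module.End.eigenspace A (α i))
    (hUspan : ⨆ i, U i = ⊤) (hUorth : ∀ i j, i ≠ j → ∀ x ∈ U i, ∀ y ∈ U j, ⟪x, y⟫ = 0)
    (hker : LinearMap.ker br = U top) (hhi : ∀ i, i ≠ hi → i ≠ top → α i < α hi)
    (hadd : α hi + α lo = α top) (x : HV n) {u : HV n} (hu : u ∈ U lo) :
    br x u = br ((U hi).starProjection x) u := by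
  conv_lhs => rw [← sum_starProjection hUorth hUspan x]
  rw [map_sum, LinearMap.sum_apply, Finset.sum_eq_single hi (fun i _ hi_ne =>
    hbr.apply_eq_zero_of_ne hA hU hker hhi hadd hi_ne (Submodule.starProjection_apply_mem _ _) hu)
    (by simp)]

end IsHeisenbergBracket

end Grading

section Fin

variable {n k : ℕ} {br : HV n →ₗ[ℝ] HV n →ₗ[ℝ] HV n} {α : Fin (k + 1) → ℝ}
  {U : Fin (k + 1) → Submodule ℝ (HV n)}

theorem iSup_ite_sup_ker_eq_orthogonal
    (hUorth : ∀ i j, i ≠ j → ∀ x ∈ U i, ∀ y ∈ U j, ⟪x, y⟫ = 0) (hUspan : ⨆ i, U i = ⊤)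
    (hker : LinearMap.ker br = U (Fin.last k)) {hi : Fin (k + 1)} (hhi : (hi : ℕ) + 1 = k) :
    (⨆ i : Fin (k + 1), if (i : ℕ) + 1 < k then U i else ⊥) ⊔ LinearMap.ker br = (U hi)ᗮ := by
  refine le_antisymm (sup_le (iSup_le fun i => ?_) ?_) fun x hx => ?_
  · split_ifs with h
    · exact le_orthogonal_of_ne hUorth fun h' => by rw [h'] at h; omega
    · exact bot_le
  · exact hker ▸ le_orthogonal_of_ne hUorth fun h => by rw [← h, Fin.val_last] at hhi; omega
  · rw [← sum_starProjection hUorth hUspan x]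
    refine Submodule.sum_mem _ fun i _ => ?_
    rcases lt_trichotomy ((i : ℕ) + 1) k with h | h | h
    · refine Submodule.mem_sup_left (Submodule.mem_iSup_of_mem i ?_)
      rw [if_pos h]
      exact Submodule.starProjection_apply_mem _ _
    · obtain rfl : i = hi := Fin.ext (by omega)
      rw [(Submodule.starProjection_apply_eq_zero_iff _).mpr hx]
      exact zero_mem _
    · obtain rfl : i = Fin.last k := Fin.ext (by have := i.2; simp; omega)
      exact Submodule.mem_sup_right (hker ▸ Submodule.starProjection_apply_mem _ _)

theorem norm_starProjection_le_rpow_of_normA_le {x : HV n} {R : ℝ} (h : normA α U x ≤ R)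
    {j : Fin (k + 1)} (hα : 0 < α j) : ‖(U j).starProjection x‖ ≤ R ^ α j := by
  simp only [normA, Submodule.coe_orthogonalProjectionOnto_apply] at h
  have hj : ‖(U j).starProjection x‖ ^ (α j)⁻¹ ≤ R :=
    (Finset.single_le_sum (fun i _ => by positivity) (Finset.mem_univ j)).trans h
  calc ‖(U j).starProjection x‖ = (‖(U j).starProjection x‖ ^ (α j)⁻¹) ^ α j :=
        (Real.rpow_inv_rpow (norm_nonneg _) hα.ne').symm
    _ ≤ R ^ α j := Real.rpow_le_rpow (by positivity) hj hα.le

theorem apply_eq_zero_of_forall_exists_normA_le (hαpos : ∀ i, 0 < α i)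
    (hUorth : ∀ i j, i ≠ j → ∀ x ∈ U i, ∀ y ∈ U j, ⟪x, y⟫ = 0)
    (hbrnorm : ∀ x y : HV n, ‖br x y‖ ≤ ‖x‖ * ‖y‖) {lo top : Fin (k + 1)} (hlo_top : lo ≠ top)
    (hbr_top : ∀ x y, br x y ∈ U top) {s h : HV n} {R : ℝ}
    (hR : ∀ u ∈ U lo, ∃ u' ∈ U lo, normA α U (s + (u' - u) + (2⁻¹ : ℝ) • br h (u + u')) ≤ R)
    {u : HV n} (hu : u ∈ U lo) : br h u = 0 := by
  set sLo := (U lo).starProjection s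
  set sTop := (U top).starProjection s
  refine eq_zero_of_forall_norm_smul_le
    (C := R ^ α top + ‖sTop‖ + ‖h‖ * (R ^ α lo + ‖sLo‖) / 2) fun c => ?_
  obtain ⟨u', hu', hR'⟩ := hR (c • u) (Submodule.smul_mem _ c hu)
  set w := u' - c • u with hw
  have hwlo : w ∈ U lo := sub_mem hu' (Submodule.smul_mem _ c hu)
  have hlo_le := norm_starProjection_le_rpow_of_normA_le hR' (hαpos lo)
  have htop_le := norm_starProjection_le_rpow_of_normA_le hR' (hαpos top)
  rw [map_add, map_add, map_smul, Submodule.starProjection_eq_self_iff.mpr hwlo,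
    starProjection_eq_zero_of_mem hUorth hlo_top (hbr_top _ _), smul_zero, add_zero] at hlo_le
  rw [map_add, map_add, map_smul, starProjection_eq_zero_of_mem hUorth hlo_top.symm hwlo,
    Submodule.starProjection_eq_self_iff.mpr (hbr_top _ _), add_zero] at htop_le
  have hw_le : ‖w‖ ≤ R ^ α lo + ‖sLo‖ := by
    have := norm_sub_le (sLo + w) sLo
    rw [add_sub_cancel_left] at this
    linarith
  have hsplit :
      c • br h u = (sTop + (2⁻¹ : ℝ) • br h (c • u + u')) - sTop - (2⁻¹ : ℝ) • br h w := by
    rw [hw, map_add, map_sub, map_smul]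
    module
  have hbw : ‖(2⁻¹ : ℝ) • br h w‖ ≤ ‖h‖ * (R ^ α lo + ‖sLo‖) / 2 := by
    rw [norm_smul, Real.norm_eq_abs, abs_of_pos (by norm_num)]
    have := (hbrnorm h w).trans (mul_le_mul_of_nonneg_left hw_le (norm_nonneg h))
    linarith
  calc ‖c • br h u‖ ≤ ‖sTop + (2⁻¹ : ℝ) • br h (c • u + u')‖ + ‖sTop‖ + ‖(2⁻¹ : ℝ) • br h w‖ := by
        rw [hsplit]
        exact norm_sub_le_of_le (norm_sub_le _ _) le_rfl
    _ ≤ _ := by linarith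

end Fin

theorem stmt14_general
    (n k : ℕ)
    (br : HV n →ₗ[ℝ] HV n →ₗ[ℝ] HV n) (hbr : IsHeisenbergBracket n br)
    (A : HV n →ₗ[ℝ] HV n) (hA : IsDerivation br A)
    (α : Fin (k + 1) → ℝ) (hαmono : StrictMono α) (hαpos : ∀ i, 0 < α i)
    (U : Fin (k + 1) → Submodule ℝ (HV n))
    (hU : ∀ i, U i = Module.End.eigenspace A (α i))
    (hUne : ∀ i, U i ≠ ⊥) (hUspan : (⨆ i, U i) = ⊤)
    (hUorth : ∀ i j, i ≠ j → ∀ x ∈ U i, ∀ y ∈ U j, (inner ℝ x y : ℝ) = 0)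
    (hbrnorm : ∀ x y : HV n, ‖br x y‖ ≤ ‖x‖ * ‖y‖)
    (hk2 : 2 ≤ k) :
    ∀ g g' : HV n,
      g' ∈ leftCoset br g
        ((((⨆ i : Fin (k + 1), if (i : ℕ) + 1 < k then U i else ⊥) ⊔ LinearMap.ker br :
          Submodule ℝ (HV n))) : Set (HV n)) ↔
      ∃ R : ℝ,
        (∀ x ∈ leftCoset br g (U 0 : Set (HV n)),
          ∃ y ∈ leftCoset br g' (U 0 : Set (HV n)), qd br α U x y ≤ R) ∧
        (∀ y ∈ leftCoset br g' (U 0 : Set (HV n)),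
          ∃ x ∈ leftCoset br g (U 0 : Set (HV n)), qd br α U x y ≤ R) := by
  intro g g'
  set hi : Fin (k + 1) := ⟨k - 1, by omega⟩
  have hhi : ∀ i, i ≠ hi → i ≠ Fin.last k → α i < α hi := fun i h h' =>
    hαmono (Fin.lt_def.mpr (by simp [hi, Fin.ext_iff] at h h' ⊢; omega))
  have hhi_top : hi ≠ Fin.last k := by simp [hi, Fin.ext_iff]; omega
  have hlo_top : (0 : Fin (k + 1)) ≠ Fin.last k := by simp [Fin.ext_iff]; omega
  have hlo_hi : (0 : Fin (k + 1)) ≠ hi := by simp [hi, Fin.ext_iff]; omega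
  have hker := hbr.ker_eq_of_forall_le hA hU hUspan hαpos
    (fun i => hαmono.monotone (Fin.le_last i)) (hUne _)
  have hadd := hbr.add_eq_of_forall_lt hA hU hUspan hUorth hαpos hker
    (fun i => hαmono.monotone (Fin.zero_le i)) hhi hlo_top hhi_top (hUne 0) (hUne hi)
  rw [hbr.mem_leftCoset_iff, SetLike.mem_coe,
    iSup_ite_sup_ker_eq_orthogonal hUorth hUspan hker (hi := hi) (by simp [hi]; omega),
    ← Submodule.starProjection_apply_eq_zero_iff]
  set s := hMul br (-g) g'
  have hformula : ∀ u ∈ U 0, ∀ u' ∈ U 0, hMul br (-(hMul br g u)) (hMul br g' u') =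
      s + (u' - u) + (2⁻¹ : ℝ) • br ((U hi).starProjection s) (u + u') := fun u hu u' hu' => by
    rw [hbr.hMul_neg_hMul_hMul, hbr.apply_eq_zero_of_ne hA hU hker hhi hadd hlo_hi hu hu',
      hbr.apply_eq_apply_starProjection hA hU hUspan hUorth hker hhi hadd _ (add_mem hu hu'),
      sub_zero]
  constructor
  · intro hs
    refine ⟨normA α U s, ?_, ?_⟩ <;> rintro _ ⟨u, hu, rfl⟩ <;>
      exact ⟨_, ⟨u, hu, rfl⟩, by simp [qd, hformula u hu u hu, hs]⟩
  · rintro ⟨R, hR, -⟩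
    refine hbr.eq_zero_of_forall_apply_eq_zero hA hU hUspan hUorth hker hhi_top hadd
      (Submodule.starProjection_apply_mem _ _) fun u hu => ?_
    refine apply_eq_zero_of_forall_exists_normA_le (s := s) (R := R) hαpos hUorth hbrnorm hlo_top
      (fun x y => hker ▸ hbr.apply_mem_ker x y) (fun u hu => ?_) hu
    obtain ⟨_, ⟨u', hu', rfl⟩, hq⟩ := hR _ ⟨u, hu, rfl⟩
    exact ⟨u', hu', by rwa [qd, hformula u hu u' hu'] at hq⟩

theorem stmt14
    (n k : ℕ) (hn : 1 ≤ n) (hk : 1 ≤ k)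
    (br : HV n →ₗ[ℝ] HV n →ₗ[ℝ] HV n) (hbr : IsHeisenbergBracket n br)
    (A : HV n →ₗ[ℝ] HV n) (hA : IsDerivation br A)
    (α : Fin (k + 1) → ℝ) (hαmono : StrictMono α) (hαpos : ∀ i, 0 < α i)
    (U : Fin (k + 1) → Submodule ℝ (HV n))
    (hU : ∀ i, U i = Module.End.eigenspace A (α i))
    (hUne : ∀ i, U i ≠ ⊥) (hUspan : (⨆ i, U i) = ⊤)
    (hUorth : ∀ i j, i ≠ j → ∀ x ∈ U i, ∀ y ∈ U j, (inner ℝ x y : ℝ) = 0)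
    (hbrnorm : ∀ x y : HV n, ‖br x y‖ ≤ ‖x‖ * ‖y‖)
    (hk2 : 2 ≤ k) :
    ∀ g g' : HV n,
      g' ∈ leftCoset br g
        ((((⨆ i : Fin (k + 1), if (i : ℕ) + 1 < k then U i else ⊥) ⊔ LinearMap.ker br :
          Submodule ℝ (HV n))) : Set (HV n)) ↔
      ∃ R : ℝ,
        (∀ x ∈ leftCoset br g (U 0 : Set (HV n)),
          ∃ y ∈ leftCoset br g' (U 0 : Set (HV n)), qd br α U x y ≤ R) ∧
        (∀ y ∈ leftCoset br g' (U 0 : Set (HV n)),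
          ∃ x ∈ leftCoset br g (U 0 : Set (HV n)), qd br α U x y ≤ R) :=
  stmt14_general n k br hbr A hA α hαmono hαpos U hU hUne hUspan hUorth hbrnorm hk2
end
end
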